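/- arXiv:1510.07135 — 4 statements merged into one kernel-verified Lean document; each statement's English description precedes it below -/
import Mathlib

section
/- The complements of cycles form an infinite antichain for the induced minor relation: for all integers m and n with 6 ≤ m < n, the complement of the cycle C_m is not an induced minor of the complement of the cycle C_n. -/
open SimpleGraph
open Fin.CommRing Fin.NatCast

namespace IMWQO

/-- `H` is an induced minor of `G`: there is a family of pairwise disjoint nonempty
connected subsets of `V(G)`, indexed by `V(H)`, such that distinct branch sets are
joined by an edge of `G` iff the corresponding vertices are adjacent in `H`. -/
def IsInducedMinor {α β : Type*} (H : SimpleGraph α) (G : SimpleGraph β) : Prop :=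
  ∃ μ : α → Set β,
    (∀ a, (μ a).Nonempty) ∧
    (∀ a b, a ≠ b → Disjoint (μ a) (μ b)) ∧
    (∀ a, (G.induce (μ a)).Connected) ∧
    (∀ a b, a ≠ b → ((∃ x ∈ μ a, ∃ y ∈ μ b, G.Adj x y) ↔ H.Adj a b))

/-- A bundled finite simple graph. -/
abbrev FinGraph := Σ n : ℕ, SimpleGraph (Fin n)

/-- The induced minor relation on bundled finite graphs. -/
def FinGraph.IM (H G : FinGraph) : Prop := IsInducedMinor H.2 G.2

/-- A class of finite graphs is well-quasi-ordered by the induced minor relation. -/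
def WqoClass (P : FinGraph → Prop) : Prop :=
  ∀ f : ℕ → FinGraph, (∀ i, P (f i)) → ∃ i j, i < j ∧ FinGraph.IM (f i) (f j)

/-- `K̂₄`: `K₄` (on vertices `0,1,2,3`) plus a vertex `4` adjacent to `0` and `1`. -/
def hatK4 : SimpleGraph (Fin 5) :=
  SimpleGraph.fromRel fun a b =>
    (a.val < 4 ∧ b.val < 4) ∨ (a.val = 4 ∧ (b.val = 0 ∨ b.val = 1))

/-- The gem: the path `0 - 1 - 2 - 3` plus a dominating vertex `4`. -/
def gem : SimpleGraph (Fin 5) :=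
  SimpleGraph.fromRel fun a b =>
    (b.val = a.val + 1 ∧ b.val ≤ 3) ∨ a.val = 4

/-- The complete graph on four vertices. -/
def K4 : SimpleGraph (Fin 4) := ⊤

/-- The prism, i.e. the Cartesian (box) product `K₃ □ K₂`. -/
def prism : SimpleGraph (Fin 3 × Fin 2) :=
  (⊤ : SimpleGraph (Fin 3)) □ (⊤ : SimpleGraph (Fin 2))

/-- The complete bipartite graph `K_{3,3}`. -/
def K33 : SimpleGraph (Fin 3 ⊕ Fin 3) := completeBipartiteGraph (Fin 3) (Fin 3)

/-- Subdivide the edge `{u,v}` of `G`, the new vertex being `Fin.last n`. -/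
def subdivideEdge {n : ℕ} (G : SimpleGraph (Fin n)) (u v : Fin n) :
    SimpleGraph (Fin (n + 1)) :=
  SimpleGraph.fromRel fun a b =>
    (∃ a' b' : Fin n, a = a'.castSucc ∧ b = b'.castSucc ∧ G.Adj a' b' ∧
      ¬(a' = u ∧ b' = v) ∧ ¬(a' = v ∧ b' = u))
    ∨ (a = Fin.last n ∧ (b = u.castSucc ∨ b = v.castSucc))

/-- One subdivision step on bundled graphs: the first graph is obtained from the
second one by subdividing one edge. -/
inductive SubdivStep : FinGraph → FinGraph → Prop
  | mk {n : ℕ} (G : SimpleGraph (Fin n)) (u v : Fin n) (h : G.Adj u v) :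
      SubdivStep ⟨n + 1, subdivideEdge G u v⟩ ⟨n, G⟩

/-- `G` is (isomorphic to) a subdivision of `H`. -/
def IsSubdivision {α β : Type*} (G : SimpleGraph α) (H : SimpleGraph β) : Prop :=
  ∃ A B : FinGraph, Nonempty (G ≃g A.2) ∧ Nonempty (H ≃g B.2) ∧
    Relation.ReflTransGen SubdivStep A B

/-- `G` contains a subdivision of `H` as a subgraph. -/
def ContainsSubdivAsSubgraph {α β : Type*} (G : SimpleGraph α) (H : SimpleGraph β) : Prop :=
  ∃ S : G.Subgraph, IsSubdivision S.coe H

/-- `G` has a proper `K₄`-subdivision: for some vertex `v`, `G - v` contains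
a subdivision of `K₄` as a subgraph. -/
def HasProperK4Subdivision {α : Type*} (G : SimpleGraph α) : Prop :=
  ∃ v : α, ContainsSubdivAsSubgraph (G.induce {u | u ≠ v}) K4

/-- `G` is 2-connected: at least 3 vertices, and removing any vertex leaves it connected. -/
def TwoConnected {α : Type*} [Fintype α] (G : SimpleGraph α) : Prop :=
  3 ≤ Fintype.card α ∧ ∀ v : α, (G.induce {u | u ≠ v}).Connected

/-- `G` is complete multipartite: two vertices are adjacent iff they lie in different
classes of some partition (equivalence relation). -/
def IsCompleteMultipartite {α : Type*} (G : SimpleGraph α) : Prop :=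
  ∃ s : Setoid α, ∀ u v, G.Adj u v ↔ ¬ s.r u v

/-- `G` is a cograph: it has no induced path on four vertices. -/
def IsCograph {α : Type*} (G : SimpleGraph α) : Prop :=
  ∀ f : Fin 4 → α, Function.Injective f →
    ¬ (∀ a b : Fin 4, G.Adj (f a) (f b) ↔ (pathGraph 4).Adj a b)

/-- `G` is a linear forest: acyclic with maximum degree at most 2,
i.e. a disjoint union of paths. -/
def IsLinearForest {α : Type*} (G : SimpleGraph α) : Prop :=
  G.IsAcyclic ∧ ∀ v, (G.neighborSet v).ncard ≤ 2

/-- The set `C` induces an (induced) cycle in `G`. -/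
def InducesCycle {α : Type*} (G : SimpleGraph α) (C : Set α) : Prop :=
  ∃ n : ℕ, 3 ≤ n ∧ Nonempty ((G.induce C) ≃g cycleGraph n)

/-- The set `S` induces a path in `G` all of whose internal vertices have degree two
in `G`. -/
def IsBasicPath {α : Type*} (G : SimpleGraph α) (S : Set α) : Prop :=
  ∃ (n : ℕ) (φ : (G.induce S) ≃g pathGraph n),
    ∀ v : S, (φ v).val ≠ 0 → (φ v).val ≠ n - 1 → (G.neighborSet v.val).ncard = 2

/-- The wheel with cycle `0, …, n-1` and center adjacent to the vertices of `T`. -/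
def wheelGraph (n : ℕ) (T : Finset (Fin n)) : SimpleGraph (Fin n ⊕ Unit) :=
  SimpleGraph.fromRel fun a b =>
    (∃ x y : Fin n, a = Sum.inl x ∧ b = Sum.inl y ∧ (cycleGraph n).Adj x y)
    ∨ (∃ x ∈ T, a = Sum.inr () ∧ b = Sum.inl x)

/-- `G` is a `k`-wheel: a cycle of order at least `max k 3` plus a center adjacent to
exactly `k` distinct vertices of the cycle. -/
def IsWheel {α : Type*} (k : ℕ) (G : SimpleGraph α) : Prop :=
  ∃ n : ℕ, 3 ≤ n ∧ k ≤ n ∧ ∃ T : Finset (Fin n), T.card = k ∧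
    Nonempty (G ≃g wheelGraph n T)

/-- A 3-wheel subgraph of `G`: a cycle of `G` together with a center outside the cycle
joined to (at least) three distinct vertices of the cycle by edges of `G`. -/
structure ThreeWheelSub {α : Type*} (G : SimpleGraph α) where
  base : α
  cyc : G.Walk base base
  cyc_isCycle : cyc.IsCycle
  center : α
  center_not_mem : center ∉ cyc.support
  spokes : Finset α
  spokes_card : spokes.card = 3
  spokes_sub : ∀ x ∈ spokes, x ∈ cyc.support
  spokes_adj : ∀ x ∈ spokes, G.Adj center x

/-- The number of vertices of a 3-wheel subgraph. -/
def ThreeWheelSub.order {α : Type*} [DecidableEq α] {G : SimpleGraph α}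
    (W : ThreeWheelSub G) : ℕ :=
  W.cyc.support.toFinset.card + 1

/-- `G` has a cycle-multipartite decomposition. -/
def HasCycleMultipartiteDecomp {α : Type*} (G : SimpleGraph α) : Prop :=
  ∃ C R : Set α, C ∪ R = Set.univ ∧ Disjoint C R ∧
    InducesCycle G C ∧ IsCompleteMultipartite (G.induce R) ∧
    ∀ u ∈ R, ∀ v ∈ R, ∀ c ∈ C, (G.Adj u c ↔ G.Adj v c)

/-- A bundled finite simple graph whose vertices are labeled by finite subsets of `S`. -/
structure LabGraph (S : Type*) where
  n : ℕ
  graph : SimpleGraph (Fin n)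
  label : Fin n → Finset S

/-- The domination order on finite subsets of a quasi-order: `A ≤^P B` iff there is an
injection `φ : A → B` with `r a (φ a)` for all `a ∈ A`. -/
def FinsetLE {S : Type*} (r : S → S → Prop) (A B : Finset S) : Prop :=
  ∃ φ : {x // x ∈ A} → {x // x ∈ B}, Function.Injective φ ∧ ∀ a, r a.val (φ a).val

/-- The union of the labels of the vertices in `A`. -/
noncomputable def labelUnion {S : Type*} {n : ℕ} (lab : Fin n → Finset S)
    (A : Finset (Fin n)) : Finset S :=
  letI := Classical.decEq S
  A.biUnion lab

/-- Label-respecting induced minor relation on labeled graphs. -/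
def LabIM {S : Type*} (r : S → S → Prop) (H G : LabGraph S) : Prop :=
  ∃ μ : Fin H.n → Finset (Fin G.n),
    (∀ a, (μ a).Nonempty) ∧
    (∀ a b, a ≠ b → Disjoint (μ a) (μ b)) ∧
    (∀ a, (G.graph.induce (↑(μ a) : Set (Fin G.n))).Connected) ∧
    (∀ a b, a ≠ b → ((∃ x ∈ μ a, ∃ y ∈ μ b, G.graph.Adj x y) ↔ H.graph.Adj a b)) ∧
    (∀ a, FinsetLE r (H.label a) (labelUnion G.label (μ a)))

/-- Label-respecting contraction relation on labeled graphs: an induced minor model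
whose branch sets cover all vertices. -/
def LabContraction {S : Type*} (r : S → S → Prop) (H G : LabGraph S) : Prop :=
  ∃ μ : Fin H.n → Finset (Fin G.n),
    (∀ a, (μ a).Nonempty) ∧
    (∀ a b, a ≠ b → Disjoint (μ a) (μ b)) ∧
    (∀ x : Fin G.n, ∃ a, x ∈ μ a) ∧
    (∀ a, (G.graph.induce (↑(μ a) : Set (Fin G.n))).Connected) ∧
    (∀ a b, a ≠ b → ((∃ x ∈ μ a, ∃ y ∈ μ b, G.graph.Adj x y) ↔ H.graph.Adj a b)) ∧
    (∀ a, FinsetLE r (H.label a) (labelUnion G.label (μ a)))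

/-- Label-respecting induced subgraph relation on labeled graphs. -/
def LabISub {S : Type*} (r : S → S → Prop) (H G : LabGraph S) : Prop :=
  ∃ φ : Fin H.n → Fin G.n, Function.Injective φ ∧
    (∀ a b, H.graph.Adj a b ↔ G.graph.Adj (φ a) (φ b)) ∧
    (∀ a, FinsetLE r (H.label a) (G.label (φ a)))

/-- A relation is a well-quasi-order: every infinite sequence contains a good pair. -/
def IsWqo {S : Type*} (r : S → S → Prop) : Prop :=
  ∀ g : ℕ → S, ∃ i j, i < j ∧ r (g i) (g j)


lemma fin_natCast_ne_zero {n k : ℕ} (hk : 0 < k) (h : k < n + 2) :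
    ((k : ℕ) : Fin (n+2)) ≠ 0 := by
  rw [ne_eq, Fin.natCast_eq_zero]
  intro hdvd
  exact absurd (Nat.le_of_dvd hk hdvd) (by omega)

lemma cg_adj_cases {n : ℕ} {x y : Fin (n+2)} (h : (cycleGraph (n+2)).Adj x y) :
    y = x - 1 ∨ y = x + 1 := by
  rw [cycleGraph_adj] at h
  rcases h with h | h
  · left; linear_combination -h
  · right; linear_combination h

lemma cg_common {n : ℕ} (h4 : (4 : Fin (n+2)) ≠ 0) {x1 x2 y y' : Fin (n+2)}
    (hx : x1 ≠ x2)
    (h1 : (cycleGraph (n+2)).Adj y x1) (h2 : (cycleGraph (n+2)).Adj y x2)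
    (h1' : (cycleGraph (n+2)).Adj y' x1) (h2' : (cycleGraph (n+2)).Adj y' x2) :
    y = y' := by
  rcases cg_adj_cases h1 with e1 | e1 <;> rcases cg_adj_cases h2 with e2 | e2 <;>
    rcases cg_adj_cases h1' with e3 | e3 <;> rcases cg_adj_cases h2' with e4 | e4 <;>
    first
      | linear_combination e1 - e3
      | linear_combination e3 - e1
      | exact absurd (show x1 = x2 by linear_combination e1 - e2) hx
      | exact absurd (show x1 = x2 by linear_combination e3 - e4) hx
      | exact absurd (show (4 : Fin (n+2)) = 0 by linear_combination e3 - e1 + e2 - e4) h4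
      | exact absurd (show (4 : Fin (n+2)) = 0 by linear_combination e1 - e3 + e4 - e2) h4

/-- Complements of cycles form an infinite antichain for the induced minor relation. -/
theorem antiholes_antichain (m n : ℕ) (hm : 6 ≤ m) (hmn : m < n) :
    ¬ IsInducedMinor (cycleGraph m)ᶜ (cycleGraph n)ᶜ := by
  obtain ⟨m', rfl⟩ : ∃ k, m = k + 2 := ⟨m - 2, by omega⟩
  obtain ⟨n', rfl⟩ : ∃ k, n = k + 2 := ⟨n - 2, by omega⟩
  rintro ⟨μ, hne, hdisj, hconn, hadj⟩
  have h4n : (4 : Fin (n'+2)) ≠ 0 := by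
    have := fin_natCast_ne_zero (n := n') (k := 4) (by omega) (by omega)
    simpa using this
  have h1m : (1 : Fin (m'+2)) ≠ 0 := by
    have := fin_natCast_ne_zero (n := m') (k := 1) (by omega) (by omega)
    simp only [Nat.cast_one] at this
    exact this
  have h2m : (2 : Fin (m'+2)) ≠ 0 := by
    have := fin_natCast_ne_zero (n := m') (k := 2) (by omega) (by omega)
    simpa using this
  -- In C_m, every vertex is adjacent to its two distinct neighbours
  have hadjp : ∀ a : Fin (m'+2), (cycleGraph (m'+2)).Adj a (a+1) := by
    intro a
    rw [cycleGraph_adj]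
    right
    ring
  have hadjm : ∀ a : Fin (m'+2), (cycleGraph (m'+2)).Adj a (a-1) := by
    intro a
    rw [cycleGraph_adj]
    left
    ring
  have hnbne : ∀ a : Fin (m'+2), a + 1 ≠ a - 1 := by
    intro a h
    exact h2m (by linear_combination h)
  -- Lemma A: across an edge of C_m, branch sets are completely joined in C_n
  have adjA : ∀ a b : Fin (m'+2), (cycleGraph (m'+2)).Adj a b →
      ∀ x ∈ μ a, ∀ y ∈ μ b, (cycleGraph (n'+2)).Adj x y := by
    intro a b hab x hx y hy
    have hab' : a ≠ b := hab.ne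
    have hiff := hadj a b hab'
    have hnr : ¬ ((cycleGraph (m'+2))ᶜ.Adj a b) := by
      rw [compl_adj]
      push_neg
      intro _
      exact hab
    by_contra hnadj
    apply hnr
    apply hiff.mp
    refine ⟨x, hx, y, hy, ?_⟩
    rw [compl_adj]
    exact ⟨fun heq => Set.disjoint_left.mp (hdisj a b hab') hx (heq ▸ hy), hnadj⟩
  -- All branch sets are singletons
  have hsingle : ∀ a : Fin (m'+2), ∀ x1 ∈ μ a, ∀ x2 ∈ μ a, x1 = x2 := by
    intro a x1 hx1 x2 hx2
    by_contra hx
    obtain ⟨y, hy⟩ := hne (a+1)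
    obtain ⟨y', hy'⟩ := hne (a-1)
    have h1 := (adjA a (a+1) (hadjp a) x1 hx1 y hy).symm
    have h2 := (adjA a (a+1) (hadjp a) x2 hx2 y hy).symm
    have h3 := (adjA a (a-1) (hadjm a) x1 hx1 y' hy').symm
    have h4 := (adjA a (a-1) (hadjm a) x2 hx2 y' hy').symm
    have heq : y = y' := cg_common h4n hx h1 h2 h3 h4
    exact Set.disjoint_left.mp (hdisj (a+1) (a-1) (hnbne a)) hy
      (by rw [heq]; exact hy')
  choose f hf using hne
  have hμ : ∀ a, μ a = {f a} :=
    fun a => Set.eq_singleton_iff_unique_mem.mpr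
      ⟨hf a, fun x hx => hsingle a x hx (f a) (hf a)⟩
  have hfinj : Function.Injective f := by
    intro a b hab
    by_contra hneq
    exact Set.disjoint_left.mp (hdisj a b hneq) (hf a) (by rw [hab]; exact hf b)
  -- adjacency transfer
  have htrans : ∀ a b : Fin (m'+2), a ≠ b →
      ((cycleGraph (n'+2)).Adj (f a) (f b) ↔ (cycleGraph (m'+2)).Adj a b) := by
    intro a b hab
    have hiff := hadj a b hab
    rw [hμ a, hμ b] at hiff
    simp only [Set.mem_singleton_iff, exists_eq_left] at hiff
    rw [compl_adj, compl_adj] at hiff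
    constructor
    · intro h
      by_contra hm0
      exact (hiff.mpr ⟨hab, hm0⟩).2 h
    · intro h
      by_contra hn0
      exact (hiff.mp ⟨hfinj.ne hab, hn0⟩).2 h
  -- the image of f is closed under successor
  set S : Finset (Fin (n'+2)) := Finset.image f Finset.univ with hS
  have hstep : ∀ x ∈ S, x + 1 ∈ S := by
    intro x hx
    obtain ⟨a, -, rfl⟩ := Finset.mem_image.mp hx
    have hne1 : a ≠ a + 1 := fun h => h1m (by linear_combination -h)
    have hne2 : a ≠ a - 1 := fun h => h1m (by linear_combination h)
    have hb1 : (cycleGraph (n'+2)).Adj (f a) (f (a+1)) :=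
      (htrans a (a+1) hne1).mpr (hadjp a)
    have hb2 : (cycleGraph (n'+2)).Adj (f a) (f (a-1)) :=
      (htrans a (a-1) hne2).mpr (hadjm a)
    have hdist : f (a+1) ≠ f (a-1) := fun h => hnbne a (hfinj h)
    rcases cg_adj_cases hb1 with c1 | c1
    · rcases cg_adj_cases hb2 with c2 | c2
      · exact absurd (c1.trans c2.symm) hdist
      · exact Finset.mem_image.mpr ⟨a-1, Finset.mem_univ _, c2⟩
    · exact Finset.mem_image.mpr ⟨a+1, Finset.mem_univ _, c1⟩
  have hall : ∀ j : ℕ, f 0 + (j : Fin (n'+2)) ∈ S := by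
    intro j
    induction j with
    | zero =>
      simp only [Nat.cast_zero, add_zero]
      exact Finset.mem_image_of_mem f (Finset.mem_univ 0)
    | succ k ih =>
      have hc : ((k+1 : ℕ) : Fin (n'+2)) = ((k : ℕ) : Fin (n'+2)) + 1 := by
        push_cast
        ring
      rw [hc, ← add_assoc]
      exact hstep _ ih
  have huniv : S = Finset.univ := by
    ext y
    simp only [Finset.mem_univ, iff_true]
    have h0 := hall (y - f 0).val
    rw [Fin.cast_val_eq_self] at h0
    have : f 0 + (y - f 0) = y := by ring
    rwa [this] at h0
  have hcard1 : S.card = m' + 2 := by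
    rw [hS, Finset.card_image_of_injective _ hfinj, Finset.card_univ, Fintype.card_fin]
  rw [huniv, Finset.card_univ, Fintype.card_fin] at hcard1
  omega

end IMWQO
end

section
/- Let H be a finite simple graph. If the class Excl(H) of all finite simple graphs not containing H as an induced minor is well-quasi-ordered by the induced minor relation, then the complement of H is a linear forest. -/
open SimpleGraph

namespace IMWQO

section AuxLemmas

open scoped Fin.CommRing

variable {n : ℕ}

lemma finNatCast_ne_zero [NeZero n] {k : ℕ} (h0 : 0 < k) (hk : k < n) :
    ((k : ℕ) : Fin n) ≠ 0 := by
  intro h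
  have hd : n ∣ k := Fin.natCast_eq_zero.mp h
  have := Nat.le_of_dvd h0 hd
  omega

lemma fin_add_one_ne_sub_one [NeZero n] (hn : 3 ≤ n) (a : Fin n) : a + 1 ≠ a - 1 := by
  intro h
  have h2 : a + 2 = a := by
    have h1 : a + 1 + 1 = a := by
      have := congrArg (· + 1) h
      simpa [sub_add_cancel] using this
    calc a + 2 = a + 1 + 1 := by ring
      _ = a := h1
  have h3 : (2 : Fin n) = 0 := by
    have := h2
    rwa [add_eq_left] at this
  have h4 : ((2 : ℕ) : Fin n) = 0 := by exact_mod_cast h3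
  exact finNatCast_ne_zero (by omega) (by omega) h4

lemma fin_close4 [NeZero n] (hn : 5 ≤ n) {p q : Fin n}
    (h1 : p - 1 = q + 1) (h2 : p + 1 = q - 1) : False := by
  have hq : q = p + 2 := by
    have h2' : p + 1 + 1 = q := by
      have := congrArg (· + 1) h2
      simpa [sub_add_cancel] using this
    calc q = p + 1 + 1 := h2'.symm
      _ = p + 2 := by ring
  have hp : p = q + 1 + 1 := by
    have := congrArg (· + 1) h1
    simpa [sub_add_cancel] using this
  rw [hq] at hp
  have h4 : (4 : Fin n) = 0 := by
    have h4' : p + 4 = p := by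
      calc p + 4 = p + 2 + 1 + 1 := by ring
        _ = p := hp.symm
    rwa [add_eq_left] at h4'
  have h5 : ((4 : ℕ) : Fin n) = 0 := by exact_mod_cast h4
  exact finNatCast_ne_zero (by omega) (by omega) h5

lemma cycle_adj' [NeZero n] (hn : 2 ≤ n) {u v : Fin n} :
    (cycleGraph n).Adj u v ↔ v = u - 1 ∨ v = u + 1 := by
  obtain ⟨m, rfl⟩ : ∃ m, n = m + 2 := ⟨n - 2, by omega⟩
  rw [SimpleGraph.cycleGraph_adj]
  constructor
  · rintro (h | h)
    · left
      rw [sub_eq_iff_eq_add] at h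
      rw [h]; ring
    · right
      rw [sub_eq_iff_eq_add] at h
      rw [h]; ring
  · rintro (h | h)
    · left; rw [h]; ring
    · right; rw [h]; ring

lemma adj_mem_pair [NeZero n] (hn : 2 ≤ n) {x y : Fin n}
    (h : (cycleGraph n).Adj x y) : y = x - 1 ∨ y = x + 1 :=
  (cycle_adj' hn).mp h

lemma antichain {l n : ℕ} (hl : 3 ≤ l) (hn : 5 ≤ n) (hln : l < n) :
    ¬ IsInducedMinor (cycleGraph l)ᶜ (cycleGraph n)ᶜ := by
  haveI : NeZero l := ⟨by omega⟩
  haveI : NeZero n := ⟨by omega⟩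
  rintro ⟨μ, hnem, hdis, -, hadj⟩
  have hmem_ne : ∀ {a b : Fin l} {x y : Fin n}, a ≠ b → x ∈ μ a → y ∈ μ b → x ≠ y := by
    intro a b x y hab hx hy h
    exact Set.disjoint_left.mp (hdis a b hab) hx (h ▸ hy)
  have J : ∀ a b : Fin l, (cycleGraph l).Adj a b →
      ∀ x ∈ μ a, ∀ y ∈ μ b, (cycleGraph n).Adj x y := by
    intro a b hab x hx y hy
    by_contra hc
    have hca : (cycleGraph l)ᶜ.Adj a b :=
      (hadj a b hab.ne).mp ⟨x, hx, y, hy,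
        ((cycleGraph n).compl_adj x y).mpr ⟨hmem_ne hab.ne hx hy, hc⟩⟩
    exact (((cycleGraph l).compl_adj a b).mp hca).2 hab
  have hsing : ∀ (a : Fin l), ∀ x ∈ μ a, ∀ y ∈ μ a, x = y := by
    intro a p hp q hq
    by_contra hpq
    obtain ⟨y, hy⟩ := hnem (a + 1)
    obtain ⟨z, hz⟩ := hnem (a - 1)
    have hsub : a + 1 ≠ a - 1 := fin_add_one_ne_sub_one hl a
    have ha1 : (cycleGraph l).Adj a (a + 1) := (cycle_adj' (by omega)).mpr (Or.inr rfl)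
    have ha2 : (cycleGraph l).Adj a (a - 1) := (cycle_adj' (by omega)).mpr (Or.inl rfl)
    have hyz : y ≠ z := hmem_ne hsub hy hz
    have h1 := adj_mem_pair (show 2 ≤ n by omega) (J a (a+1) ha1 p hp y hy)
    have h2 := adj_mem_pair (show 2 ≤ n by omega) (J a (a+1) ha1 q hq y hy)
    have h3 := adj_mem_pair (show 2 ≤ n by omega) (J a (a-1) ha2 p hp z hz)
    have h4 := adj_mem_pair (show 2 ≤ n by omega) (J a (a-1) ha2 q hq z hz)
    rcases h1 with rfl | rfl <;> rcases h3 with rfl | rfl <;>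
      rcases h2 with h2 | h2 <;> rcases h4 with h4 | h4 <;>
      first
        | exact hyz rfl
        | exact hpq (sub_left_inj.mp h2)
        | exact hpq ((add_left_inj _).mp h2)
        | exact hpq (sub_left_inj.mp h4)
        | exact hpq ((add_left_inj _).mp h4)
        | exact fin_close4 hn h2 h4
        | exact fin_close4 hn h4 h2
  choose φ hφ using hnem
  have hinj : Function.Injective φ := by
    intro a b hab
    by_contra hne'
    exact hmem_ne hne' (hφ a) (hφ b) hab
  have htrans : ∀ a b : Fin l, a ≠ b →
      ((cycleGraph n).Adj (φ a) (φ b) ↔ (cycleGraph l).Adj a b) := by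
    intro a b hab
    constructor
    · intro hAdj
      by_contra hcl
      obtain ⟨x, hx, y, hy, hxy⟩ :=
        (hadj a b hab).mpr (((cycleGraph l).compl_adj a b).mpr ⟨hab, hcl⟩)
      have hx' : x = φ a := hsing a x hx (φ a) (hφ a)
      have hy' : y = φ b := hsing b y hy (φ b) (hφ b)
      rw [hx', hy'] at hxy
      exact (((cycleGraph n).compl_adj _ _).mp hxy).2 hAdj
    · intro hAdj
      exact J a b hAdj (φ a) (hφ a) (φ b) (hφ b)
  have hstep : ∀ a : Fin l, ∃ b : Fin l, φ b = φ a + 1 := by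
    intro a
    have h1l : (cycleGraph l).Adj a (a + 1) := (cycle_adj' (by omega)).mpr (Or.inr rfl)
    have h2l : (cycleGraph l).Adj a (a - 1) := (cycle_adj' (by omega)).mpr (Or.inl rfl)
    have hd : a + 1 ≠ a - 1 := fin_add_one_ne_sub_one hl a
    have hp1 := adj_mem_pair (show 2 ≤ n by omega) ((htrans a (a+1) h1l.ne).mpr h1l)
    have hp2 := adj_mem_pair (show 2 ≤ n by omega) ((htrans a (a-1) h2l.ne).mpr h2l)
    have hdd : φ (a+1) ≠ φ (a-1) := fun hcc => hd (hinj hcc)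
    rcases hp1 with h | h
    · rcases hp2 with h' | h'
      · exact absurd (h.trans h'.symm) hdd
      · exact ⟨a - 1, h'⟩
    · exact ⟨a + 1, h⟩
  have hiter : ∀ k : ℕ, ∃ b : Fin l, φ b = φ 0 + (k : Fin n) := by
    intro k
    induction k with
    | zero => exact ⟨0, by simp⟩
    | succ k ih =>
      obtain ⟨b, hb⟩ := ih
      obtain ⟨cc, hcc⟩ := hstep b
      refine ⟨cc, ?_⟩
      rw [hcc, hb]
      push_cast
      ring
  have hsurj : Function.Surjective φ := by
    intro y
    obtain ⟨b, hb⟩ := hiter (y - φ 0).val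
    refine ⟨b, ?_⟩
    rw [hb, Fin.cast_val_eq_self, add_comm, sub_add_cancel]
  have hcard := Fintype.card_le_of_surjective φ hsurj
  simp only [Fintype.card_fin] at hcard
  omega

lemma avoid_deg {β : Type*} (H : SimpleGraph β) [NeZero n] (hn : 5 ≤ n)
    {v a b c : β} (hab : a ≠ b) (hac : a ≠ c) (hbc : b ≠ c)
    (hva : Hᶜ.Adj v a) (hvb : Hᶜ.Adj v b) (hvc : Hᶜ.Adj v c) :
    ¬ IsInducedMinor H (cycleGraph n)ᶜ := by
  rintro ⟨μ, hnem, hdis, -, hadj⟩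
  obtain ⟨x, hx⟩ := hnem v
  have key : ∀ w : β, Hᶜ.Adj v w → ∀ y ∈ μ w, (cycleGraph n).Adj x y := by
    intro w hw y hy
    have hvw : v ≠ w := hw.ne
    have hno : ¬ ∃ p ∈ μ v, ∃ q ∈ μ w, (cycleGraph n)ᶜ.Adj p q := by
      rw [hadj v w hvw]
      exact ((H.compl_adj v w).mp hw).2
    by_contra hc2
    have hxy : x ≠ y := fun h => Set.disjoint_left.mp (hdis v w hvw) hx (h ▸ hy)
    exact hno ⟨x, hx, y, hy, ((cycleGraph n).compl_adj x y).mpr ⟨hxy, hc2⟩⟩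
  obtain ⟨ya, hya⟩ := hnem a
  obtain ⟨yb, hyb⟩ := hnem b
  obtain ⟨yc, hyc⟩ := hnem c
  have h1 := adj_mem_pair (show 2 ≤ n by omega) (key a hva ya hya)
  have h2 := adj_mem_pair (show 2 ≤ n by omega) (key b hvb yb hyb)
  have h3 := adj_mem_pair (show 2 ≤ n by omega) (key c hvc yc hyc)
  have hd1 : ya ≠ yb := fun h => Set.disjoint_left.mp (hdis a b hab) hya (h ▸ hyb)
  have hd2 : ya ≠ yc := fun h => Set.disjoint_left.mp (hdis a c hac) hya (h ▸ hyc)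
  have hd3 : yb ≠ yc := fun h => Set.disjoint_left.mp (hdis b c hbc) hyb (h ▸ hyc)
  rcases h1 with rfl | rfl <;> rcases h2 with h2 | h2 <;> rcases h3 with h3 | h3 <;>
    first
      | exact hd1 h2.symm
      | exact hd2 h3.symm
      | exact hd3 (h2.trans h3.symm)

lemma walk_support_getElem {V : Type*} {G : SimpleGraph V} {u v : V} (p : G.Walk u v) :
    ∀ (i : ℕ) (h : i < p.support.length), p.support[i] = p.getVert i := by
  induction p with
  | nil =>
    intro i h
    simp only [SimpleGraph.Walk.support_nil, List.length_singleton] at h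
    have : i = 0 := by omega
    subst this
    simp [SimpleGraph.Walk.getVert_zero]
  | cons hadj q ih =>
    intro i h
    cases i with
    | zero => simp [SimpleGraph.Walk.getVert_zero, SimpleGraph.Walk.support_cons]
    | succ i =>
      simp only [SimpleGraph.Walk.support_cons, List.getElem_cons_succ,
        SimpleGraph.Walk.getVert_cons_succ]
      exact ih i (by
        simp only [SimpleGraph.Walk.support_cons, List.length_cons] at h; omega)

lemma avoid_cycle {β : Type*} [Fintype β] (H : SimpleGraph β)
    (hdeg : ∀ w : β, (Hᶜ.neighborSet w).ncard ≤ 2)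
    {v : β} {c : Hᶜ.Walk v v} (hc : c.IsCycle)
    {n : ℕ} (hn : 5 ≤ n) (hcard : Fintype.card β < n) :
    ¬ IsInducedMinor H (cycleGraph n)ᶜ := by
  intro him
  have hl3 : 3 ≤ c.length := hc.three_le_length
  haveI : NeZero c.length := ⟨by omega⟩
  set l := c.length with hldef
  set ψ : Fin l → β := fun i => c.getVert (i.val + 1) with hψ
  have hsupp : c.support.length = l + 1 := by
    rw [SimpleGraph.Walk.length_support]
  have htail : c.support.tail.length = l := by
    rw [List.length_tail, hsupp]
    omega
  have hψt : ∀ i : Fin l,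
      c.support.tail[i.val]'(by rw [htail]; exact i.isLt) = ψ i := by
    intro i
    rw [List.getElem_tail]
    exact walk_support_getElem c (i.val + 1) (by rw [hsupp]; omega)
  have hinj : Function.Injective ψ := by
    intro i j hij
    have e1 := hψt i
    have e2 := hψt j
    have e3 : c.support.tail[i.val]'(by rw [htail]; exact i.isLt)
        = c.support.tail[j.val]'(by rw [htail]; exact j.isLt) := by
      rw [e1, e2, hij]
    have := (hc.support_nodup.getElem_inj_iff).mp e3
    exact Fin.ext this
  have hval1 : (1 : Fin l).val = 1 := by
    rw [Fin.val_one']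
    exact Nat.mod_eq_of_lt (by omega)
  have hvaladd : ∀ i : Fin l, (i + 1 : Fin l).val = (i.val + 1) % l := by
    intro i
    rw [Fin.val_add, hval1]
  have hstep : ∀ i : Fin l, Hᶜ.Adj (ψ i) (ψ (i + 1)) := by
    intro i
    show Hᶜ.Adj (c.getVert (i.val + 1)) (c.getVert ((i + 1 : Fin l).val + 1))
    by_cases hlt : i.val + 1 < l
    · rw [hvaladd i, Nat.mod_eq_of_lt hlt]
      exact c.adj_getVert_succ hlt
    · have hieq : i.val + 1 = l := by have := i.isLt; omega
      rw [hvaladd i, hieq, Nat.mod_self]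
      have h01 := c.adj_getVert_succ (show 0 < c.length by omega)
      rw [SimpleGraph.Walk.getVert_zero] at h01
      have hvl : c.getVert l = v := SimpleGraph.Walk.getVert_length c
      rw [hvl]
      simpa using h01
  have hstep' : ∀ i : Fin l, Hᶜ.Adj (ψ i) (ψ (i - 1)) := by
    intro i
    have := hstep (i - 1)
    rw [sub_add_cancel] at this
    exact this.symm
  have hnon : ∀ i j : Fin l, i ≠ j → ¬ (cycleGraph l).Adj i j →
      ¬ Hᶜ.Adj (ψ i) (ψ j) := by
    intro i j hij hcycadj hadj'
    have hj1 : j ≠ i + 1 := fun h => hcycadj ((cycle_adj' (by omega)).mpr (Or.inr h))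
    have hj2 : j ≠ i - 1 := fun h => hcycadj ((cycle_adj' (by omega)).mpr (Or.inl h))
    have hd12 : ψ (i+1) ≠ ψ (i-1) := fun h => fin_add_one_ne_sub_one hl3 i (hinj h)
    have hdj1 : ψ j ≠ ψ (i+1) := fun h => hj1 (hinj h)
    have hdj2 : ψ j ≠ ψ (i-1) := fun h => hj2 (hinj h)
    have hsubset : ({ψ (i+1), ψ (i-1), ψ j} : Set β) ⊆ Hᶜ.neighborSet (ψ i) := by
      intro z hz
      simp only [Set.mem_insert_iff, Set.mem_singleton_iff] at hz
      rcases hz with rfl | rfl | rfl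
      · exact hstep i
      · exact hstep' i
      · exact hadj'
    have h3c : ({ψ (i+1), ψ (i-1), ψ j} : Set β).ncard = 3 := by
      rw [Set.ncard_insert_of_notMem (by
        simp only [Set.mem_insert_iff, Set.mem_singleton_iff]
        push_neg
        exact ⟨hd12, fun h => hdj1 h.symm⟩) (Set.toFinite _)]
      rw [Set.ncard_pair (fun h => hdj2 h.symm)]
    have hle := Set.ncard_le_ncard hsubset (Set.toFinite _)
    have := hdeg (ψ i)
    omega
  have hIff : ∀ i j : Fin l, i ≠ j →
      (H.Adj (ψ i) (ψ j) ↔ (cycleGraph l)ᶜ.Adj i j) := by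
    intro i j hij
    constructor
    · intro hH
      refine ((cycleGraph l).compl_adj i j).mpr ⟨hij, fun hcyc => ?_⟩
      have hcadj : Hᶜ.Adj (ψ i) (ψ j) := by
        rcases (cycle_adj' (show 2 ≤ l by omega)).mp hcyc with h | h
        · rw [h]; exact hstep' i
        · rw [h]; exact hstep i
      exact ((H.compl_adj _ _).mp hcadj).2 hH
    · intro hcl
      obtain ⟨-, hncyc⟩ := ((cycleGraph l).compl_adj i j).mp hcl
      have hne' : ψ i ≠ ψ j := fun h => hij (hinj h)
      by_contra hH
      exact hnon i j hij hncyc ((H.compl_adj _ _).mpr ⟨hne', hH⟩)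
  obtain ⟨μ, h1, h2, h3, h4⟩ := him
  have hlen : l ≤ Fintype.card β := by
    have := hc.support_nodup.length_le_card
    rwa [htail] at this
  refine antichain hl3 hn (by omega)
    ⟨fun i => μ (ψ i), fun i => h1 _, ?_, fun i => h3 _, ?_⟩
  · intro i j hij
    exact h2 (ψ i) (ψ j) (fun hh => hij (hinj hh))
  · intro i j hij
    rw [h4 (ψ i) (ψ j) (fun hh => hij (hinj hh))]
    exact hIff i j hij

end AuxLemmas

/-- If `Excl(H)` is wqo by induced minors, then the complement of `H` is
a linear forest. -/
theorem wqo_implies_compl_linearForest {α : Type*} [Fintype α] (H : SimpleGraph α)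
    (h : WqoClass (fun G => ¬ IsInducedMinor H G.2)) :
    IsLinearForest Hᶜ := by
  classical
  by_contra hnot
  set N := Fintype.card α + 5 with hN
  have havoid : ∀ i : ℕ, ¬ IsInducedMinor H (cycleGraph (N + i))ᶜ := by
    intro i
    haveI : NeZero (N + i) := ⟨by omega⟩
    by_cases hdeg : ∀ w, (Hᶜ.neighborSet w).ncard ≤ 2
    · have hcyc : ¬ Hᶜ.IsAcyclic := fun hac => hnot ⟨hac, hdeg⟩
      have hex : ∃ (v : α) (c : Hᶜ.Walk v v), c.IsCycle := by
        by_contra hno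
        push_neg at hno
        exact hcyc fun {v} c => hno v c
      obtain ⟨v, cc, hcc⟩ := hex
      exact avoid_cycle H hdeg hcc (by omega) (by omega)
    · push_neg at hdeg
      obtain ⟨w, hw⟩ := hdeg
      have hfin : (Hᶜ.neighborSet w).Finite := Set.toFinite _
      have hcard : 2 < hfin.toFinset.card := by
        rwa [Set.ncard_eq_toFinset_card _ hfin] at hw
      obtain ⟨a, ha⟩ := Finset.card_pos.mp (show 0 < hfin.toFinset.card by omega)
      obtain ⟨b, hb⟩ := Finset.card_pos.mp
        (show 0 < (hfin.toFinset.erase a).card by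
          rw [Finset.card_erase_of_mem ha]; omega)
      obtain ⟨cx, hcx⟩ := Finset.card_pos.mp
        (show 0 < ((hfin.toFinset.erase a).erase b).card by
          rw [Finset.card_erase_of_mem hb, Finset.card_erase_of_mem ha]; omega)
      have hba : b ≠ a := (Finset.mem_erase.mp hb).1
      have hcxb : cx ≠ b := (Finset.mem_erase.mp hcx).1
      have hcxa : cx ≠ a := (Finset.mem_erase.mp (Finset.mem_erase.mp hcx).2).1
      have hbmem : b ∈ hfin.toFinset := (Finset.mem_erase.mp hb).2
      have hcxmem : cx ∈ hfin.toFinset := (Finset.mem_erase.mp (Finset.mem_erase.mp hcx).2).2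
      have hAa : Hᶜ.Adj w a := by
        have := hfin.mem_toFinset.mp ha; exact this
      have hAb : Hᶜ.Adj w b := by
        have := hfin.mem_toFinset.mp hbmem; exact this
      have hAc : Hᶜ.Adj w cx := by
        have := hfin.mem_toFinset.mp hcxmem; exact this
      exact avoid_deg H (by omega) (fun h => hba h.symm) (fun h => hcxa h.symm)
        (fun h => hcxb h.symm) hAa hAb hAc
  obtain ⟨i, j, hij, him⟩ :=
    h (fun i => ⟨N + i, (cycleGraph (N + i))ᶜ⟩) havoid
  exact antichain (by omega) (by omega) (by omega) him

end IMWQO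
end

section
/- Let G be a 2-connected finite simple graph that does not contain K̂₄ as an induced minor and that contains a proper K₄-subdivision. Then for every subgraph S of G that is a subdivision of K₄ and every vertex x ∈ V(G) \ V(S), the vertex x has at least three neighbors in V(S). -/
open SimpleGraph

namespace IMWQO

/-! ## Auxiliary machinery for the proof -/

section Aux

variable {V : Type*} {W : Type*}

/-- `t` is a "connected-on" set: any two vertices of `t` are joined by a walk
staying inside `t`. -/
def ConnOn (G : SimpleGraph V) (t : Set V) : Prop :=
  ∀ u ∈ t, ∀ v ∈ t, ∃ w : G.Walk u v, ∀ z ∈ w.support, z ∈ t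

lemma connOn_singleton (G : SimpleGraph V) (a : V) : ConnOn G {a} := by
  intro u hu v hv
  rw [Set.mem_singleton_iff] at hu hv
  subst hu; subst hv
  exact ⟨Walk.nil, by simp⟩

lemma connOn_mono_iff {G : SimpleGraph V} {t s : Set V} (h : t = s) :
    ConnOn G t ↔ ConnOn G s := by rw [h]

lemma connOn_support {G : SimpleGraph V} {u v : V} (w : G.Walk u v) :
    ConnOn G {z | z ∈ w.support} := by
  classical
  intro a ha b hb
  refine ⟨((w.takeUntil a ha).reverse).append (w.takeUntil b hb), ?_⟩
  intro z hz
  rw [Walk.mem_support_append_iff] at hz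
  rcases hz with hz | hz
  · rw [Walk.support_reverse, List.mem_reverse] at hz
    exact w.support_takeUntil_subset ha hz
  · exact w.support_takeUntil_subset hb hz

lemma connOn_union {G : SimpleGraph V} {t s : Set V} (ht : ConnOn G t) (hs : ConnOn G s)
    (hm : ∃ m, m ∈ t ∧ m ∈ s) : ConnOn G (t ∪ s) := by
  obtain ⟨m, hmt, hms⟩ := hm
  have key : ∀ u ∈ t ∪ s, ∃ w : G.Walk u m, ∀ z ∈ w.support, z ∈ t ∪ s := by
    intro u hu
    rcases hu with hu | hu
    · obtain ⟨w, hw⟩ := ht u hu m hmt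
      exact ⟨w, fun z hz => Or.inl (hw z hz)⟩
    · obtain ⟨w, hw⟩ := hs u hu m hms
      exact ⟨w, fun z hz => Or.inr (hw z hz)⟩
  intro u hu v hv
  obtain ⟨w1, hw1⟩ := key u hu
  obtain ⟨w2, hw2⟩ := key v hv
  refine ⟨w1.append w2.reverse, ?_⟩
  intro z hz
  rw [Walk.mem_support_append_iff] at hz
  rcases hz with hz | hz
  · exact hw1 z hz
  · rw [Walk.support_reverse, List.mem_reverse] at hz
    exact hw2 z hz

/-- Convert a `ConnOn` set into connectivity of the induced subgraph. -/
lemma connOn_induce_connected {G : SimpleGraph V} {t : Set V} (hne : t.Nonempty)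
    (h : ConnOn G t) : (G.induce t).Connected := by
  rw [connected_iff]
  constructor
  · rintro ⟨u, hu⟩ ⟨v, hv⟩
    obtain ⟨w, hw⟩ := h u hu v hv
    clear hne
    induction w with
    | nil => rfl
    | @cons a b c hadj p ih =>
      have hb : b ∈ t := hw b (by simp)
      have ha : a ∈ t := hw a (by simp)
      have h1 : (G.induce t).Adj ⟨a, ha⟩ ⟨b, hb⟩ := by
        simp only [comap_adj, Function.Embedding.coe_subtype]
        exact hadj
      exact h1.reachable.trans (ih hb hv (fun z hz => hw z (by simp [hz])))
  · exact ⟨⟨hne.choose, hne.choose_spec⟩⟩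

/-- A walk in an induced subgraph maps to a walk in the ambient graph avoiding nothing. -/
def induceOut (G : SimpleGraph V) (s : Set V) : G.induce s →g G :=
  ⟨Subtype.val, fun {a b} h => h⟩

/-- From 2-connectivity-style hypothesis: a walk between two vertices avoiding a third. -/
lemma exists_walk_avoiding {G : SimpleGraph V}
    (hc : ∀ v : V, (G.induce {u | u ≠ v}).Connected) {x t v : V}
    (hx : x ≠ v) (ht : t ≠ v) :
    ∃ w : G.Walk x t, ∀ z ∈ w.support, z ≠ v := by
  obtain ⟨p⟩ := (hc v).preconnected ⟨x, hx⟩ ⟨t, ht⟩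
  refine ⟨p.map (induceOut G {u | u ≠ v}), ?_⟩
  intro z hz
  replace hz : z ∈ (p.map (induceOut G {u | u ≠ v})).support := hz
  rw [Walk.support_map, List.mem_map] at hz
  obtain ⟨⟨z', hz'⟩, _, rfl⟩ := hz
  exact hz'

/-- First-hit extraction: from a walk from `x ∉ T` to `t ∈ T`, extract a path
hitting `T` only at its endpoint, with support inside the original walk's support. -/
lemma firstHit {G : SimpleGraph V} {x t : V} (w : G.Walk x t) (T : Set V)
    (hx : x ∉ T) (ht : t ∈ T) :
    ∃ z ∈ T, ∃ P : G.Walk x z, P.IsPath ∧ (∀ y ∈ P.support, y ∈ w.support) ∧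
      (∀ y ∈ P.support, y ∈ T → y = z) := by
  classical
  induction w with
  | nil => exact absurd ht hx
  | @cons a b c hadj p ih =>
    by_cases hb : b ∈ T
    · refine ⟨b, hb, Walk.cons hadj Walk.nil, ?_, ?_, ?_⟩
      · simp [Walk.isPath_def, hadj.ne]
      · intro y hy
        simp only [Walk.support_cons, Walk.support_nil, List.mem_cons,
          List.mem_singleton, List.not_mem_nil, or_false] at hy ⊢
        rcases hy with h | h
        · exact Or.inl h
        · right; rw [h]; exact Walk.start_mem_support p
      · intro y hy hyT
        simp only [Walk.support_cons, Walk.support_nil, List.mem_cons,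
          List.mem_singleton, List.not_mem_nil, or_false] at hy
        rcases hy with rfl | rfl
        · exact absurd hyT hx
        · rfl
    · obtain ⟨z, hzT, P, hP, hPsub, hPT⟩ := ih hb ht
      refine ⟨z, hzT, (Walk.cons hadj P).bypass, Walk.bypass_isPath _, ?_, ?_⟩
      · intro y hy
        have := (Walk.cons hadj P).support_bypass_subset hy
        simp only [Walk.support_cons, List.mem_cons] at this ⊢
        rcases this with rfl | h
        · exact Or.inl rfl
        · exact Or.inr (hPsub y h)
      · intro y hy hyT
        have := (Walk.cons hadj P).support_bypass_subset hy
        simp only [Walk.support_cons, List.mem_cons] at this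
        rcases this with rfl | h
        · exact absurd hyT hx
        · exact hPT y h hyT


/-! ### Part B : structure of subdivisions of K₄ -/

section PartB

variable {n : ℕ} {H : SimpleGraph (Fin n)} {u v : Fin n}

lemma subdivideEdge_adj_castSucc {a b : Fin n} (hab : H.Adj a b)
    (h1 : ¬(a = u ∧ b = v)) (h2 : ¬(a = v ∧ b = u)) :
    (subdivideEdge H u v).Adj a.castSucc b.castSucc := by
  rw [subdivideEdge, fromRel_adj]
  refine ⟨by simpa [Fin.castSucc_inj] using hab.ne, Or.inl ?_⟩
  exact Or.inl ⟨a, b, rfl, rfl, hab, h1, h2⟩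

lemma subdivideEdge_adj_last_left (H : SimpleGraph (Fin n)) (u v : Fin n) :
    (subdivideEdge H u v).Adj (Fin.last n) u.castSucc := by
  rw [subdivideEdge, fromRel_adj]
  exact ⟨(Fin.castSucc_lt_last u).ne', Or.inl (Or.inr ⟨rfl, Or.inl rfl⟩)⟩

lemma subdivideEdge_adj_last_right (H : SimpleGraph (Fin n)) (u v : Fin n) :
    (subdivideEdge H u v).Adj (Fin.last n) v.castSucc := by
  rw [subdivideEdge, fromRel_adj]
  exact ⟨(Fin.castSucc_lt_last v).ne', Or.inl (Or.inr ⟨rfl, Or.inr rfl⟩)⟩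

/-- Lift a walk of `H` to a walk of the subdivision, possibly using the new vertex. -/
lemma subdivideEdge_lift_walk {a b : Fin n} (w : H.Walk a b) :
    ∃ w' : (subdivideEdge H u v).Walk a.castSucc b.castSucc,
      ∀ z ∈ w'.support,
        (∃ c ∈ w.support, z = Fin.castSucc c) ∨
        (z = Fin.last n ∧ u ∈ w.support ∧ v ∈ w.support) := by
  induction w with
  | nil => exact ⟨Walk.nil, by intro z hz; simp at hz; exact Or.inl ⟨_, by simp, hz⟩⟩
  | @cons a c b hadj p ih =>
    obtain ⟨p', hp'⟩ := ih
    by_cases hcase : (a = u ∧ c = v) ∨ (a = v ∧ c = u)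
    · have e1 : (subdivideEdge H u v).Adj a.castSucc (Fin.last n) := by
        rcases hcase with ⟨rfl, rfl⟩ | ⟨rfl, rfl⟩
        · exact (subdivideEdge_adj_last_left H a c).symm
        · exact (subdivideEdge_adj_last_right H c a).symm
      have e2 : (subdivideEdge H u v).Adj (Fin.last n) c.castSucc := by
        rcases hcase with ⟨rfl, rfl⟩ | ⟨rfl, rfl⟩
        · exact subdivideEdge_adj_last_right H a c
        · exact subdivideEdge_adj_last_left H c a
      refine ⟨Walk.cons e1 (Walk.cons e2 p'), ?_⟩
      intro z hz
      simp only [Walk.support_cons, List.mem_cons] at hz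
      rcases hz with rfl | rfl | hz
      · exact Or.inl ⟨a, by simp, rfl⟩
      · refine Or.inr ⟨rfl, ?_, ?_⟩ <;>
          (rcases hcase with ⟨rfl, rfl⟩ | ⟨rfl, rfl⟩ <;> simp)
      · rcases hp' z hz with ⟨d, hd, rfl⟩ | ⟨rfl, h1, h2⟩
        · exact Or.inl ⟨d, by simp [hd], rfl⟩
        · exact Or.inr ⟨rfl, by simp [h1], by simp [h2]⟩
    · have hc1 : ¬(a = u ∧ c = v) := fun h => hcase (Or.inl h)
      have hc2 : ¬(a = v ∧ c = u) := fun h => hcase (Or.inr h)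
      refine ⟨Walk.cons (subdivideEdge_adj_castSucc hadj hc1 hc2) p', ?_⟩
      intro z hz
      simp only [Walk.support_cons, List.mem_cons] at hz
      rcases hz with rfl | hz
      · exact Or.inl ⟨a, by simp, rfl⟩
      · rcases hp' z hz with ⟨d, hd, rfl⟩ | ⟨rfl, h1, h2⟩
        · exact Or.inl ⟨d, by simp [hd], rfl⟩
        · exact Or.inr ⟨rfl, by simp [h1], by simp [h2]⟩

end PartB

section PartB2

variable {n : ℕ}

/-- Every subdivision of `K₄` admits, for any two prescribed distinct vertices,
a spanning partition into four connected, pairwise adjacent parts separating them. -/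
def SepPart (H : SimpleGraph (Fin n)) : Prop :=
  ∀ s1 s2 : Fin n, s1 ≠ s2 →
    ∃ μ : Fin 4 → Set (Fin n),
      (∀ i, (μ i).Nonempty) ∧
      (∀ i j, i ≠ j → Disjoint (μ i) (μ j)) ∧
      (∀ z, ∃ i, z ∈ μ i) ∧
      (∀ i, ConnOn H (μ i)) ∧
      (∀ i j, i ≠ j → ∃ a ∈ μ i, ∃ b ∈ μ j, H.Adj a b) ∧
      (∃ i j, i ≠ j ∧ s1 ∈ μ i ∧ s2 ∈ μ j)

lemma sepPart_of_iso {H : SimpleGraph (Fin n)} (e : K4 ≃g H) : SepPart H := by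
  intro s1 s2 hne
  refine ⟨fun i => {e i}, fun i => ⟨e i, rfl⟩, ?_, ?_, fun i => connOn_singleton H (e i),
    ?_, e.symm s1, e.symm s2, ?_, by simp, by simp⟩
  · intro i j hij
    rw [Set.disjoint_left]
    rintro z rfl hz
    rw [Set.mem_singleton_iff] at hz
    exact hij (e.injective hz)
  · intro z; exact ⟨e.symm z, by simp⟩
  · intro i j hij
    refine ⟨e i, rfl, e j, rfl, ?_⟩
    have : K4.Adj i j := by simpa [K4] using hij
    exact e.map_adj_iff.mpr this
  · intro h
    exact hne (by simpa using congrArg e h)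

lemma sepPart_step {H : SimpleGraph (Fin n)} {u v : Fin n} (huv : H.Adj u v)
    (ih : SepPart H) : SepPart (subdivideEdge H u v) := by
  have main : ∀ t : Fin n, (t = u ∨ t = v) → ∀ a b : Fin n, a ≠ b →
      ∃ μ' : Fin 4 → Set (Fin (n + 1)),
        (∀ i, (μ' i).Nonempty) ∧
        (∀ i j, i ≠ j → Disjoint (μ' i) (μ' j)) ∧
        (∀ z, ∃ i, z ∈ μ' i) ∧
        (∀ i, ConnOn (subdivideEdge H u v) (μ' i)) ∧
        (∀ i j, i ≠ j → ∃ x ∈ μ' i, ∃ y ∈ μ' j, (subdivideEdge H u v).Adj x y) ∧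
        (∃ i j, i ≠ j ∧ a.castSucc ∈ μ' i ∧ b.castSucc ∈ μ' j ∧
          (t = a → Fin.last n ∈ μ' i)) := by
    intro t ht a b hab
    obtain ⟨μ, hne, hdisj, hspan, hconn, hadj, i0, j0, hij0, ha0, hb0⟩ := ih a b hab
    obtain ⟨it, hit⟩ := hspan t
    have huniq : ∀ {k l : Fin 4} {z : Fin n}, z ∈ μ k → z ∈ μ l → k = l := by
      intro k l z h1 h2
      by_contra hkl
      exact (hdisj k l hkl).ne_of_mem h1 h2 rfl
    set G' := subdivideEdge H u v with hG'
    refine ⟨fun k => Fin.castSucc '' μ k ∪ {z | z = Fin.last n ∧ k = it}, ?_, ?_, ?_, ?_, ?_,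
      i0, j0, hij0, Or.inl ⟨a, ha0, rfl⟩, Or.inl ⟨b, hb0, rfl⟩, ?_⟩
    · intro i
      obtain ⟨c, hc⟩ := hne i
      exact ⟨c.castSucc, Or.inl ⟨c, hc, rfl⟩⟩
    · intro i j hij
      rw [Set.disjoint_left]
      rintro z (⟨c, hc, rfl⟩ | ⟨rfl, rfl⟩) (⟨d, hd, h⟩ | ⟨h, rfl⟩)
      · have : d = c := Fin.castSucc_injective n h
        subst this
        exact hij (huniq hc hd)
      · exact (Fin.castSucc_lt_last c).ne h
      · exact (Fin.castSucc_lt_last d).ne h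
      · exact hij rfl
    · intro z
      by_cases hz : z = Fin.last n
      · exact ⟨it, Or.inr ⟨hz, rfl⟩⟩
      · obtain ⟨c, rfl⟩ := Fin.exists_castSucc_eq.2 hz
        obtain ⟨i, hi⟩ := hspan c
        exact ⟨i, Or.inl ⟨c, hi, rfl⟩⟩
    · -- connectivity of the lifted parts
      intro k
      have himg : ∀ c ∈ μ k, ∀ d ∈ μ k, ∃ w : G'.Walk c.castSucc d.castSucc,
          ∀ z ∈ w.support, z ∈ Fin.castSucc '' μ k ∪ {z | z = Fin.last n ∧ k = it} := by
        intro c hc d hd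
        obtain ⟨w, hw⟩ := hconn k c hc d hd
        obtain ⟨w', hw'⟩ := subdivideEdge_lift_walk (u := u) (v := v) w
        refine ⟨w', ?_⟩
        intro z hz
        rcases hw' z hz with ⟨c', hc', rfl⟩ | ⟨rfl, h1, h2⟩
        · exact Or.inl ⟨c', hw c' hc', rfl⟩
        · refine Or.inr ⟨rfl, ?_⟩
          rcases ht with rfl | rfl
          · exact huniq (hw t h1) hit
          · exact huniq (hw t h2) hit
      have hlastadj : G'.Adj (Fin.last n) t.castSucc := by
        rcases ht with h | h
        · rw [h]; exact subdivideEdge_adj_last_left H u v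
        · rw [h]; exact subdivideEdge_adj_last_right H u v
      rintro x (⟨c, hc, rfl⟩ | ⟨rfl, hx⟩) y (⟨d, hd, rfl⟩ | ⟨rfl, hy⟩)
      · exact himg c hc d hd
      · -- y = last, k = it ; walk from c to t then edge to last
        subst hy
        obtain ⟨w, hw⟩ := himg c hc t hit
        refine ⟨w.append (Walk.cons hlastadj.symm Walk.nil), ?_⟩
        intro z hz
        rw [Walk.mem_support_append_iff] at hz
        rcases hz with hz | hz
        · exact hw z hz
        · simp only [Walk.support_cons, Walk.support_nil, List.mem_cons,
            List.mem_singleton, List.not_mem_nil, or_false] at hz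
          rcases hz with rfl | rfl
          · exact Or.inl ⟨t, hit, rfl⟩
          · exact Or.inr ⟨rfl, rfl⟩
      · subst hx
        obtain ⟨w, hw⟩ := himg t hit d hd
        refine ⟨Walk.cons hlastadj w, ?_⟩
        intro z hz
        simp only [Walk.support_cons, List.mem_cons] at hz
        rcases hz with rfl | hz
        · exact Or.inr ⟨rfl, rfl⟩
        · exact hw z hz
      · exact ⟨Walk.nil, by intro z hz; simp at hz; exact Or.inr ⟨hz, hx⟩⟩
    · -- pairwise adjacency
      intro i j hij
      obtain ⟨a', ha', b', hb', hadj'⟩ := hadj i j hij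
      by_cases hcase : (a' = u ∧ b' = v) ∨ (a' = v ∧ b' = u)
      · -- the subdivided edge joins the two parts; use the new vertex
        have htcases : t = a' ∨ t = b' := by
          rcases hcase with ⟨rfl, rfl⟩ | ⟨rfl, rfl⟩ <;> tauto
        rcases htcases with rfl | rfl
        · have : i = it := huniq ha' hit
          subst this
          refine ⟨Fin.last n, Or.inr ⟨rfl, rfl⟩, b'.castSucc, Or.inl ⟨b', hb', rfl⟩, ?_⟩
          rcases hcase with ⟨rfl, rfl⟩ | ⟨rfl, rfl⟩
          · exact subdivideEdge_adj_last_right H t b'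
          · exact subdivideEdge_adj_last_left H b' t
        · have : j = it := huniq hb' hit
          subst this
          refine ⟨a'.castSucc, Or.inl ⟨a', ha', rfl⟩, Fin.last n, Or.inr ⟨rfl, rfl⟩, ?_⟩
          rcases hcase with ⟨rfl, rfl⟩ | ⟨rfl, rfl⟩
          · exact (subdivideEdge_adj_last_left H a' t).symm
          · exact (subdivideEdge_adj_last_right H t a').symm
      · have hc1 : ¬(a' = u ∧ b' = v) := fun h => hcase (Or.inl h)
        have hc2 : ¬(a' = v ∧ b' = u) := fun h => hcase (Or.inr h)
        exact ⟨a'.castSucc, Or.inl ⟨a', ha', rfl⟩, b'.castSucc, Or.inl ⟨b', hb', rfl⟩,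
          subdivideEdge_adj_castSucc hadj' hc1 hc2⟩
    · -- location of the new vertex
      intro hta
      subst hta
      have : i0 = it := huniq ha0 hit
      subst this
      exact Or.inr ⟨rfl, rfl⟩
  -- now the three cases on s1, s2
  intro s1 s2 hne
  by_cases h1 : s1 = Fin.last n
  · subst h1
    have h2 : s2 ≠ Fin.last n := fun h => hne h.symm
    obtain ⟨b, rfl⟩ := Fin.exists_castSucc_eq.2 h2
    by_cases hub : u = b
    · have htb : v ≠ b := fun h => huv.ne' (h.trans hub.symm)
      obtain ⟨μ', c1, c2, c3, c4, c5, i, j, hij, hai, hbj, hlast⟩ :=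
        main v (Or.inr rfl) v b htb
      exact ⟨μ', c1, c2, c3, c4, c5, i, j, hij, hlast rfl, hbj⟩
    · obtain ⟨μ', c1, c2, c3, c4, c5, i, j, hij, hai, hbj, hlast⟩ :=
        main u (Or.inl rfl) u b hub
      exact ⟨μ', c1, c2, c3, c4, c5, i, j, hij, hlast rfl, hbj⟩
  · obtain ⟨a, rfl⟩ := Fin.exists_castSucc_eq.2 h1
    by_cases h2 : s2 = Fin.last n
    · subst h2
      by_cases hua : u = a
      · have hta : v ≠ a := fun h => huv.ne' (h.trans hua.symm)
        obtain ⟨μ', c1, c2, c3, c4, c5, i, j, hij, hai, hbj, hlast⟩ :=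
          main v (Or.inr rfl) v a hta
        exact ⟨μ', c1, c2, c3, c4, c5, j, i, hij.symm, hbj, hlast rfl⟩
      · obtain ⟨μ', c1, c2, c3, c4, c5, i, j, hij, hai, hbj, hlast⟩ :=
          main u (Or.inl rfl) u a hua
        exact ⟨μ', c1, c2, c3, c4, c5, j, i, hij.symm, hbj, hlast rfl⟩
    · obtain ⟨b, rfl⟩ := Fin.exists_castSucc_eq.2 h2
      have hab : a ≠ b := fun h => hne (by rw [h])
      obtain ⟨μ', c1, c2, c3, c4, c5, i, j, hij, hai, hbj, _⟩ :=
        main u (Or.inl rfl) a b hab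
      exact ⟨μ', c1, c2, c3, c4, c5, i, j, hij, hai, hbj⟩

lemma sepPart_of_chain : ∀ {A B : FinGraph}, Relation.ReflTransGen SubdivStep A B →
    (K4 ≃g B.2) → SepPart A.2 := by
  intro A B h e
  induction h using Relation.ReflTransGen.head_induction_on with
  | refl => exact sepPart_of_iso e
  | head step _ ih =>
    cases step with
    | mk H u v huv => exact sepPart_step huv ih

lemma chain_card_le : ∀ {A B : FinGraph}, Relation.ReflTransGen SubdivStep A B →
    B.1 ≤ A.1 := by
  intro A B h
  induction h using Relation.ReflTransGen.head_induction_on with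
  | refl => exact le_refl _
  | head step _ ih =>
    cases step with
    | mk H u v huv => exact le_trans ih (Nat.le_succ _)


end PartB2

lemma exists_perm_fin4 {i j : Fin 4} (h : i ≠ j) :
    ∃ σ : Equiv.Perm (Fin 4), σ 0 = i ∧ σ 1 = j := by
  refine ⟨(Equiv.swap 1 ((Equiv.swap 0 i) j)).trans (Equiv.swap 0 i), ?_, ?_⟩
  · have h0 : (Equiv.swap 0 i) j ≠ 0 := by
      intro hc
      have := congrArg (Equiv.swap 0 i) hc
      rw [Equiv.swap_apply_self, Equiv.swap_apply_left] at this
      exact h this.symm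
    simp only [Equiv.trans_apply]
    rw [Equiv.swap_apply_of_ne_of_ne (by decide) (Ne.symm h0), Equiv.swap_apply_left]
  · simp only [Equiv.trans_apply]
    rw [Equiv.swap_apply_left, Equiv.swap_apply_self]

/-- Transport of the separating-partition property to an ambient graph containing a
subdivision of `K₄` as the subgraph `S`. -/
lemma sep_parts_alpha {α : Type*} {G : SimpleGraph α} {S : G.Subgraph}
    (hS : IsSubdivision S.coe K4) :
    (∃ p q, p ∈ S.verts ∧ q ∈ S.verts ∧ p ≠ q) ∧
    ∀ s1 s2, s1 ∈ S.verts → s2 ∈ S.verts → s1 ≠ s2 →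
      ∃ ν : Fin 4 → Set α,
        (∀ i, (ν i).Nonempty) ∧ (∀ i, ν i ⊆ S.verts) ∧
        (∀ i j, i ≠ j → Disjoint (ν i) (ν j)) ∧
        (∀ i, ConnOn G (ν i)) ∧
        (∀ i j, i ≠ j → ∃ a ∈ ν i, ∃ b ∈ ν j, G.Adj a b) ∧
        s1 ∈ ν 0 ∧ s2 ∈ ν 1 := by
  obtain ⟨A, B, ⟨φ⟩, ⟨ψ⟩, chain⟩ := hS
  have hsep : SepPart A.2 := sepPart_of_chain chain ψ
  have hcard : 4 ≤ A.1 := by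
    have h4 : 4 = B.1 := by
      have := Fintype.card_congr ψ.toEquiv
      simpa using this
    exact h4 ▸ chain_card_le chain
  constructor
  · have h01 : (⟨0, by omega⟩ : Fin A.1) ≠ ⟨1, by omega⟩ := by
      intro h; exact absurd (congrArg Fin.val h) (by simp)
    refine ⟨(φ.symm ⟨0, by omega⟩).val, (φ.symm ⟨1, by omega⟩).val,
      (φ.symm ⟨0, by omega⟩).2, (φ.symm ⟨1, by omega⟩).2, ?_⟩
    intro h
    exact h01 (φ.symm.injective (Subtype.ext h))
  intro s1 s2 h1 h2 hne
  have hne' : (⟨s1, h1⟩ : S.verts) ≠ ⟨s2, h2⟩ := fun h => hne (congrArg Subtype.val h)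
  obtain ⟨μ, mne, mdisj, _, mconn, madj, i0, j0, hij0, hm1, hm2⟩ :=
    hsep (φ ⟨s1, h1⟩) (φ ⟨s2, h2⟩) (fun h => hne' (φ.injective h))
  obtain ⟨σ, hσ0, hσ1⟩ := exists_perm_fin4 hij0
  refine ⟨fun k => Subtype.val '' (⇑φ.symm '' μ (σ k)), ?_, ?_, ?_, ?_, ?_, ?_, ?_⟩
  · intro i
    obtain ⟨c, hc⟩ := mne (σ i)
    exact ⟨(φ.symm c).val, ⟨φ.symm c, ⟨c, hc, rfl⟩, rfl⟩⟩
  · rintro i z ⟨m, _, rfl⟩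
    exact m.2
  · intro i j hij
    rw [Set.disjoint_left]
    rintro z ⟨m1, ⟨c1, hc1, rfl⟩, rfl⟩ ⟨m2, ⟨c2, hc2, h⟩, h'⟩
    have : m2 = φ.symm c1 := Subtype.ext h'
    subst this
    have : c2 = c1 := φ.symm.injective h
    subst this
    exact (mdisj (σ i) (σ j) (fun hc => hij (σ.injective hc))).ne_of_mem hc1 hc2 rfl
  · rintro k x ⟨m1, ⟨c1, hc1, rfl⟩, rfl⟩ y ⟨m2, ⟨c2, hc2, rfl⟩, rfl⟩
    obtain ⟨w, hw⟩ := mconn (σ k) c1 hc1 c2 hc2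
    refine ⟨(w.map φ.symm.toHom).map S.hom, ?_⟩
    intro z hz
    replace hz : z ∈ ((w.map φ.symm.toHom).map S.hom).support := hz
    rw [Walk.support_map, List.mem_map] at hz
    obtain ⟨m, hm, rfl⟩ := hz
    rw [Walk.support_map, List.mem_map] at hm
    obtain ⟨c, hc, rfl⟩ := hm
    exact ⟨φ.symm c, ⟨c, hw c hc, rfl⟩, rfl⟩
  · intro i j hij
    obtain ⟨a', ha', b', hb', hadj'⟩ := madj (σ i) (σ j) (fun hc => hij (σ.injective hc))
    refine ⟨(φ.symm a').val, ⟨φ.symm a', ⟨a', ha', rfl⟩, rfl⟩,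
      (φ.symm b').val, ⟨φ.symm b', ⟨b', hb', rfl⟩, rfl⟩, ?_⟩
    have hcoe : S.coe.Adj (φ.symm a') (φ.symm b') := φ.symm.map_adj_iff.mpr hadj'
    exact hcoe.adj_sub
  · exact ⟨φ.symm (φ ⟨s1, h1⟩), ⟨φ ⟨s1, h1⟩, hσ0 ▸ hm1, rfl⟩, by simp⟩
  · exact ⟨φ.symm (φ ⟨s2, h2⟩), ⟨φ ⟨s2, h2⟩, hσ1 ▸ hm2, rfl⟩, by simp⟩


/-! ### Part C : the 2-fan lemma -/

variable {G : SimpleGraph V} {S : Set V}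

/-- A 2-fan from `x` to `S`. -/
def FanOut (G : SimpleGraph V) (S : Set V) (x : V) : Prop :=
  ∃ a b, a ∈ S ∧ b ∈ S ∧ a ≠ b ∧
    ∃ (P : G.Walk x a) (Q : G.Walk x b), P.IsPath ∧ Q.IsPath ∧
      (∀ z ∈ P.support, z ∈ S → z = a) ∧ (∀ z ∈ Q.support, z ∈ S → z = b) ∧
      (∀ z, z ∈ P.support → z ∈ Q.support → z = x)

/-- Splitting case: `x` lies on the first leg of a fan based at `p1`. -/
lemma fan_split {x p1 a1 b1 : V} (hxS : x ∉ S) (ha1 : a1 ∈ S) (hb1 : b1 ∈ S)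
    (hab : a1 ≠ b1) (P1 : G.Walk p1 a1) (Q1 : G.Walk p1 b1)
    (hP1 : P1.IsPath) (hQ1 : Q1.IsPath)
    (hPS : ∀ z ∈ P1.support, z ∈ S → z = a1) (hQS : ∀ z ∈ Q1.support, z ∈ S → z = b1)
    (hPQ : ∀ z, z ∈ P1.support → z ∈ Q1.support → z = p1)
    (hxP : x ∈ P1.support) (hxp1 : x ≠ p1) : FanOut G S x := by
  classical
  set tk := P1.takeUntil x hxP with htk
  set dp := P1.dropUntil x hxP with hdp
  have hsplit : tk.append dp = P1 := P1.take_spec hxP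
  have hsupp : P1.support = tk.support ++ dp.support.tail := by
    rw [← hsplit, Walk.support_append]
  have hnodup : (tk.support ++ dp.support.tail).Nodup := by
    rw [← hsupp]; exact hP1.support_nodup
  have hdisj : tk.support.Disjoint dp.support.tail := List.disjoint_of_nodup_append hnodup
  have claim1 : ∀ z, z ∈ tk.support → z ∈ dp.support → z = x := by
    intro z h1 h2
    rw [Walk.support_eq_cons, List.mem_cons] at h2
    rcases h2 with rfl | h2
    · rfl
    · exact absurd h2 (hdisj h1)
  have claim2 : a1 ∉ tk.support := by
    intro h
    have : a1 ∈ dp.support := Walk.end_mem_support dp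
    have := claim1 a1 h this
    exact hxS (this ▸ ha1)
  have claim3 : p1 ∉ dp.support := by
    intro h
    exact hxp1 ((claim1 p1 (Walk.start_mem_support tk) h).symm) |>.elim
  refine ⟨a1, b1, ha1, hb1, hab, dp, (tk.reverse.append Q1).bypass,
    hP1.dropUntil hxP, Walk.bypass_isPath _, ?_, ?_, ?_⟩
  · intro z hz hzS
    exact hPS z (P1.support_dropUntil_subset hxP hz) hzS
  · intro z hz hzS
    have hz' := Walk.support_bypass_subset _ hz
    rw [Walk.mem_support_append_iff] at hz'
    rcases hz' with hz' | hz'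
    · rw [Walk.support_reverse, List.mem_reverse] at hz'
      have : z = a1 := hPS z (P1.support_takeUntil_subset hxP hz') hzS
      exact absurd (this ▸ hz') claim2
    · exact hQS z hz' hzS
  · intro z hzA hzB
    have hzB' := Walk.support_bypass_subset _ hzB
    rw [Walk.mem_support_append_iff] at hzB'
    rcases hzB' with hzB' | hzB'
    · rw [Walk.support_reverse, List.mem_reverse] at hzB'
      exact claim1 z hzB' hzA
    · have : z = p1 := hPQ z (P1.support_dropUntil_subset hxP hzA) hzB'
      exact absurd (this ▸ hzA) claim3

/-- Rerouting case: a fresh path from `x` first hits the fan on its first leg. -/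
lemma fan_reroute {x p1 a1 b1 z0 : V} (hxS : x ∉ S) (ha1 : a1 ∈ S) (hb1 : b1 ∈ S)
    (hab : a1 ≠ b1) (P1 : G.Walk p1 a1) (Q1 : G.Walk p1 b1)
    (hP1 : P1.IsPath) (hQ1 : Q1.IsPath)
    (hPS : ∀ z ∈ P1.support, z ∈ S → z = a1) (hQS : ∀ z ∈ Q1.support, z ∈ S → z = b1)
    (hPQ : ∀ z, z ∈ P1.support → z ∈ Q1.support → z = p1)
    (hx1 : G.Adj x p1) (hxP : x ∉ P1.support) (hxQ : x ∉ Q1.support)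
    (hz0P : z0 ∈ P1.support) (hz0p1 : z0 ≠ p1)
    (R : G.Walk x z0) (hRp1 : ∀ y ∈ R.support, y ≠ p1)
    (hRU : ∀ y ∈ R.support,
      (y ∈ S ∨ (y ∈ P1.support ∧ y ≠ p1) ∨ (y ∈ Q1.support ∧ y ≠ p1)) → y = z0) :
    FanOut G S x := by
  classical
  set tk := P1.takeUntil z0 hz0P with htk
  set dp := P1.dropUntil z0 hz0P with hdp
  have hsplit : tk.append dp = P1 := P1.take_spec hz0P
  have hsupp : P1.support = tk.support ++ dp.support.tail := by
    rw [← hsplit, Walk.support_append]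
  have hnodup : (tk.support ++ dp.support.tail).Nodup := by
    rw [← hsupp]; exact hP1.support_nodup
  have hdisj : tk.support.Disjoint dp.support.tail :=
    List.disjoint_of_nodup_append hnodup
  have hp1dp : p1 ∉ dp.support := by
    intro h
    rw [Walk.support_eq_cons, List.mem_cons] at h
    rcases h with h | h
    · exact hz0p1 h.symm
    · exact hdisj (Walk.start_mem_support tk) h
  refine ⟨a1, b1, ha1, hb1, hab, (R.append dp).bypass, Walk.cons hx1 Q1,
    Walk.bypass_isPath _, (Walk.cons_isPath_iff _ _).2 ⟨hQ1, hxQ⟩, ?_, ?_, ?_⟩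
  · intro z hz hzS
    have hz' := Walk.support_bypass_subset _ hz
    rw [Walk.mem_support_append_iff] at hz'
    rcases hz' with hz' | hz'
    · have hzz0 : z = z0 := hRU z hz' (Or.inl hzS)
      subst hzz0
      exact hPS z (P1.support_dropUntil_subset hz0P (Walk.start_mem_support dp)) hzS
    · exact hPS z (P1.support_dropUntil_subset hz0P hz') hzS
  · intro z hz hzS
    simp only [Walk.support_cons, List.mem_cons] at hz
    rcases hz with rfl | hz
    · exact absurd hzS hxS
    · exact hQS z hz hzS
  · intro z hzA hzB
    simp only [Walk.support_cons, List.mem_cons] at hzB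
    rcases hzB with rfl | hzB
    · rfl
    · -- z lies on Q1 and on A : impossible
      exfalso
      have hzA' := Walk.support_bypass_subset _ hzA
      rw [Walk.mem_support_append_iff] at hzA'
      rcases hzA' with hzA' | hzA'
      · have hzp1 : z ≠ p1 := hRp1 z hzA'
        have : z = z0 := hRU z hzA' (Or.inr (Or.inr ⟨hzB, hzp1⟩))
        subst this
        exact hz0p1 (hPQ z hz0P hzB)
      · have : z = p1 := hPQ z (P1.support_dropUntil_subset hz0P hzA') hzB
        exact hp1dp (this ▸ hzA')


lemma fan_aux {G : SimpleGraph V} {S : Set V}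
    (hc : ∀ v : V, (G.induce {u | u ≠ v}).Connected)
    (hS2 : ∃ a b, a ∈ S ∧ b ∈ S ∧ a ≠ b) :
    ∀ (N : ℕ) (x a : V), x ∉ S → a ∈ S → ∀ P0 : G.Walk x a, P0.IsPath →
      P0.length ≤ N → (∀ z ∈ P0.support, z ∈ S → z = a) → FanOut G S x := by
  intro N
  induction N with
  | zero =>
    intro x a hxS haS P0 _ hlen _
    cases P0 with
    | nil => exact absurd haS hxS
    | cons h p => simp at hlen
  | succ N ih =>
    intro x a hxS haS P0 hP0 hlen hP0S
    cases P0 with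
    | nil => exact absurd haS hxS
    | @cons _ p1 _ hadj w' =>
      have hxp1 : x ≠ p1 := hadj.ne
      by_cases hp1S : p1 ∈ S
      · -- x is adjacent to S : direct fan
        obtain ⟨c, d, hcS, hdS, hcd⟩ := hS2
        obtain ⟨s2, hs2S, hs2p1⟩ : ∃ s2, s2 ∈ S ∧ s2 ≠ p1 := by
          by_cases h : c = p1
          · exact ⟨d, hdS, fun hh => hcd (h ▸ hh ▸ rfl)⟩
          · exact ⟨c, hcS, h⟩
        have hxne : x ≠ p1 := hadj.ne
        obtain ⟨W, hW⟩ := exists_walk_avoiding hc hxne hs2p1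
        obtain ⟨b, hbS, Q, hQ, hQsub, hQS⟩ := firstHit W S hxS hs2S
        have hbp1 : b ≠ p1 := hW b (hQsub b (Walk.end_mem_support Q))
        refine ⟨p1, b, hp1S, hbS, fun h => hbp1 h.symm,
          Walk.cons hadj Walk.nil, Q, ?_, hQ, ?_, hQS, ?_⟩
        · simp [Walk.isPath_def, hadj.ne]
        · intro z hz hzS
          simp only [Walk.support_cons, Walk.support_nil, List.mem_cons,
            List.not_mem_nil, or_false] at hz
          rcases hz with rfl | rfl
          · exact absurd hzS hxS
          · rfl
        · intro z hz hzQ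
          simp only [Walk.support_cons, Walk.support_nil, List.mem_cons,
            List.not_mem_nil, or_false] at hz
          rcases hz with rfl | rfl
          · rfl
          · exact absurd (hW z (hQsub z hzQ)) (by simp)
      · -- recurse at p1
        have hw' : w'.IsPath := hP0.of_cons
        have hw'len : w'.length ≤ N := by
          simp only [Walk.length_cons] at hlen; omega
        have hw'S : ∀ z ∈ w'.support, z ∈ S → z = a := by
          intro z hz hzS
          exact hP0S z (by simp [Walk.support_cons, hz]) hzS
        obtain ⟨a1, b1, ha1, hb1, hab, P1, Q1, hP1, hQ1, hPS, hQS, hPQ⟩ :=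
          ih p1 a hp1S haS w' hw' hw'len hw'S
        by_cases hxP : x ∈ P1.support
        · exact fan_split hxS ha1 hb1 hab P1 Q1 hP1 hQ1 hPS hQS hPQ hxP hxp1
        · by_cases hxQ : x ∈ Q1.support
          · exact fan_split hxS hb1 ha1 hab.symm Q1 P1 hQ1 hP1 hQS hPS
              (fun z h1 h2 => hPQ z h2 h1) hxQ hxp1
          · -- x is outside the fan : reroute
            have ha1p1 : a1 ≠ p1 := fun h => hp1S (h ▸ ha1)
            obtain ⟨W, hW⟩ := exists_walk_avoiding hc hxp1 ha1p1
            set U : Set V := S ∪ {z | z ∈ P1.support ∧ z ≠ p1} ∪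
              {z | z ∈ Q1.support ∧ z ≠ p1} with hU
            have hxU : x ∉ U := by
              intro h
              rcases h with (h | h) | h
              · exact hxS h
              · exact hxP h.1
              · exact hxQ h.1
            obtain ⟨z0, hz0U, R, hR, hRsub, hRU⟩ :=
              firstHit W U hxU (Or.inl (Or.inl ha1))
            have hRp1 : ∀ y ∈ R.support, y ≠ p1 := fun y hy => hW y (hRsub y hy)
            have hRU' : ∀ y ∈ R.support,
                (y ∈ S ∨ (y ∈ P1.support ∧ y ≠ p1) ∨ (y ∈ Q1.support ∧ y ≠ p1)) →
                y = z0 := by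
              intro y hy hmem
              refine hRU y hy ?_
              rcases hmem with h | h | h
              · exact Or.inl (Or.inl h)
              · exact Or.inl (Or.inr h)
              · exact Or.inr h
            rcases hz0U with (hz0S | hz0P) | hz0Q
            · -- z0 is in S, away from the fan
              have hz0p1 : z0 ≠ p1 := fun h => hp1S (h ▸ hz0S)
              by_cases hz0a1 : z0 = a1
              · -- use Q1 for the second leg
                have hz0b1 : z0 ≠ b1 := fun h => hab (hz0a1 ▸ h ▸ rfl)
                refine ⟨z0, b1, hz0S, hb1, hz0b1, R, Walk.cons hadj Q1, hR,
                  (Walk.cons_isPath_iff _ _).2 ⟨hQ1, hxQ⟩, ?_, ?_, ?_⟩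
                · intro z hz hzS
                  exact hRU z hz (Or.inl (Or.inl hzS))
                · intro z hz hzS
                  simp only [Walk.support_cons, List.mem_cons] at hz
                  rcases hz with rfl | hz
                  · exact absurd hzS hxS
                  · exact hQS z hz hzS
                · intro z hzR hzB
                  simp only [Walk.support_cons, List.mem_cons] at hzB
                  rcases hzB with rfl | hzB
                  · rfl
                  · exfalso
                    have hzp1 : z ≠ p1 := hRp1 z hzR
                    have hzz : z = z0 := hRU z hzR (Or.inr ⟨hzB, hzp1⟩)
                    rw [hzz] at hzB
                    -- z0 = a1 ∈ Q1.support : so a1 = b1, contradiction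
                    exact hab (hz0a1 ▸ hQS z0 hzB hz0S)
              · refine ⟨z0, a1, hz0S, ha1, hz0a1, R, Walk.cons hadj P1, hR,
                  (Walk.cons_isPath_iff _ _).2 ⟨hP1, hxP⟩, ?_, ?_, ?_⟩
                · intro z hz hzS
                  exact hRU z hz (Or.inl (Or.inl hzS))
                · intro z hz hzS
                  simp only [Walk.support_cons, List.mem_cons] at hz
                  rcases hz with rfl | hz
                  · exact absurd hzS hxS
                  · exact hPS z hz hzS
                · intro z hzR hzB
                  simp only [Walk.support_cons, List.mem_cons] at hzB
                  rcases hzB with rfl | hzB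
                  · rfl
                  · exfalso
                    have hzp1 : z ≠ p1 := hRp1 z hzR
                    have hzz : z = z0 := hRU z hzR (Or.inl (Or.inr ⟨hzB, hzp1⟩))
                    rw [hzz] at hzB
                    exact hz0a1 (hPS z0 hzB hz0S)
            · exact fan_reroute hxS ha1 hb1 hab P1 Q1 hP1 hQ1 hPS hQS hPQ hadj
                hxP hxQ hz0P.1 hz0P.2 R hRp1 hRU'
            · refine fan_reroute hxS hb1 ha1 hab.symm Q1 P1 hQ1 hP1 hQS hPS
                (fun z h1 h2 => hPQ z h2 h1) hadj hxQ hxP hz0Q.1 hz0Q.2 R hRp1 ?_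
              intro y hy hmem
              refine hRU' y hy ?_
              tauto

/-- The 2-fan lemma. -/
lemma fan_lemma {G : SimpleGraph V} {S : Set V}
    (hc : ∀ v : V, (G.induce {u | u ≠ v}).Connected)
    (hS2 : ∃ a b, a ∈ S ∧ b ∈ S ∧ a ≠ b) {x : V} (hxS : x ∉ S) :
    FanOut G S x := by
  obtain ⟨a0, b0, ha0, hb0, hab0⟩ := hS2
  have hxb0 : x ≠ b0 := fun h => hxS (h ▸ hb0)
  obtain ⟨W, _⟩ := exists_walk_avoiding hc hxb0 hab0
  obtain ⟨z, hzS, P0, hP0, _, hP0S⟩ := firstHit W S hxS ha0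
  exact fan_aux hc ⟨a0, b0, ha0, hb0, hab0⟩ P0.length x z hxS hzS P0 hP0 le_rfl hP0S


instance : DecidableRel hatK4.Adj := fun a b =>
  decidable_of_iff' _ (SimpleGraph.fromRel_adj _ a b)

/-- The branch sets of the `hatK4` model. -/
def model (ν : Fin 4 → Set V) (x : V) : Fin 5 → Set V
  | 0 => ν 0
  | 1 => ν 1
  | 2 => ν 2
  | 3 => ν 3
  | 4 => {x}

/-- Build an induced-minor model of `hatK4` from four branch sets and an apex. -/
lemma build_model {G : SimpleGraph V} (ν : Fin 4 → Set V) (x : V)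
    (hne : ∀ i, (ν i).Nonempty)
    (hdisj : ∀ i j, i ≠ j → Disjoint (ν i) (ν j))
    (hx : ∀ i, x ∉ ν i)
    (hconn : ∀ i, ConnOn G (ν i))
    (hadj : ∀ i j, i ≠ j → ∃ a ∈ ν i, ∃ b ∈ ν j, G.Adj a b)
    (e0 : ∃ y ∈ ν 0, G.Adj x y) (e1 : ∃ y ∈ ν 1, G.Adj x y)
    (ne2 : ∀ y ∈ ν 2, ¬ G.Adj x y) (ne3 : ∀ y ∈ ν 3, ¬ G.Adj x y) :
    IsInducedMinor hatK4 G := by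
  have hsym2 : ∀ y ∈ ν 2, ¬ G.Adj y x := fun y hy h => ne2 y hy h.symm
  have hsym3 : ∀ y ∈ ν 3, ¬ G.Adj y x := fun y hy h => ne3 y hy h.symm
  refine ⟨model ν x, ?_, ?_, ?_, ?_⟩
  · intro a
    fin_cases a
    · exact hne 0
    · exact hne 1
    · exact hne 2
    · exact hne 3
    · exact ⟨x, rfl⟩
  · have hxd : ∀ i, Disjoint (ν i) ({x} : Set V) := by
      intro i
      rw [Set.disjoint_singleton_right]
      exact hx i
    intro a b hab
    fin_cases a <;> fin_cases b <;>
      first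
        | exact absurd rfl hab
        | exact hdisj _ _ (by decide)
        | exact hxd _
        | exact (hxd _).symm
  · intro a
    fin_cases a
    · exact connOn_induce_connected (hne 0) (hconn 0)
    · exact connOn_induce_connected (hne 1) (hconn 1)
    · exact connOn_induce_connected (hne 2) (hconn 2)
    · exact connOn_induce_connected (hne 3) (hconn 3)
    · exact connOn_induce_connected ⟨x, rfl⟩ (connOn_singleton G x)
  · intro a b hab
    have sw : ∀ i : Fin 4, (∃ y ∈ ν i, G.Adj x y) → ∃ u ∈ ({x} : Set V), ∃ v ∈ ν i, G.Adj u v :=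
      fun i ⟨y, hy, h⟩ => ⟨x, rfl, y, hy, h⟩
    have sw' : ∀ i : Fin 4, (∃ y ∈ ν i, G.Adj x y) → ∃ u ∈ ν i, ∃ v ∈ ({x} : Set V), G.Adj u v :=
      fun i ⟨y, hy, h⟩ => ⟨y, hy, x, rfl, h.symm⟩
    fin_cases a <;> fin_cases b <;>
      first
        | exact absurd rfl hab
        | exact iff_of_true (hadj _ _ (by decide)) (by decide)
        | exact iff_of_true (sw 0 e0) (by decide)
        | exact iff_of_true (sw 1 e1) (by decide)
        | exact iff_of_true (sw' 0 e0) (by decide)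
        | exact iff_of_true (sw' 1 e1) (by decide)
        | exact iff_of_false (by rintro ⟨u, hu, v, rfl, h⟩; exact hsym2 u hu h) (by decide)
        | exact iff_of_false (by rintro ⟨u, hu, v, rfl, h⟩; exact hsym3 u hu h) (by decide)
        | exact iff_of_false (by rintro ⟨u, rfl, v, hv, h⟩; exact ne2 v hv h) (by decide)
        | exact iff_of_false (by rintro ⟨u, rfl, v, hv, h⟩; exact ne3 v hv h) (by decide)


/-- Generic builder : branch sets `ν i ∪ E i` plus apex `x`. -/
lemma build_extended {V : Type*} {G : SimpleGraph V} (ν E : Fin 4 → Set V) (x : V)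
    (hneν : ∀ i, (ν i).Nonempty)
    (hdisjν : ∀ i j, i ≠ j → Disjoint (ν i) (ν j))
    (hxν : ∀ i, x ∉ ν i) (hxE : ∀ i, x ∉ E i)
    (hconn' : ∀ i, ConnOn G (ν i ∪ E i))
    (hdisjE : ∀ i j, i ≠ j → Disjoint (E i) (E j))
    (hdisjEν : ∀ i j, i ≠ j → Disjoint (E i) (ν j))
    (hadjν : ∀ i j, i ≠ j → ∃ a ∈ ν i, ∃ b ∈ ν j, G.Adj a b)
    (e0 : ∃ y ∈ ν 0 ∪ E 0, G.Adj x y) (e1 : ∃ y ∈ ν 1 ∪ E 1, G.Adj x y)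
    (ne2 : ∀ y ∈ ν 2 ∪ E 2, ¬ G.Adj x y) (ne3 : ∀ y ∈ ν 3 ∪ E 3, ¬ G.Adj x y) :
    IsInducedMinor hatK4 G := by
  refine build_model (fun i => ν i ∪ E i) x
    (fun i => Set.Nonempty.mono Set.subset_union_left (hneν i)) ?_ ?_ hconn' ?_ e0 e1 ne2 ne3
  · intro i j hij
    rw [Set.disjoint_union_left, Set.disjoint_union_right, Set.disjoint_union_right]
    exact ⟨⟨hdisjν i j hij, (hdisjEν j i hij.symm).symm⟩, hdisjEν i j hij, hdisjE i j hij⟩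
  · intro i h
    rcases h with h | h
    · exact hxν i h
    · exact hxE i h
  · intro i j hij
    obtain ⟨a, ha, b, hb, h⟩ := hadjν i j hij
    exact ⟨a, Or.inl ha, b, Or.inl hb, h⟩


end Aux

/-- In a 2-connected `K̂₄`-induced minor-free graph containing a proper
`K₄`-subdivision, every vertex outside a `K₄`-subdivision `S` has at least three
neighbors in `V(S)`. -/
theorem three_neighbors_on_K4_subdivision {α : Type*} [Fintype α] (G : SimpleGraph α)
    (h2 : TwoConnected G) (hfree : ¬ IsInducedMinor hatK4 G)
    (hprop : HasProperK4Subdivision G)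
    (S : G.Subgraph) (hS : IsSubdivision S.coe K4)
    (x : α) (hx : x ∉ S.verts) :
    3 ≤ (S.verts ∩ G.neighborSet x).ncard := by
  classical
  by_contra hlt
  rw [not_le] at hlt
  obtain ⟨⟨p, q, hpv, hqv, hpq⟩, hsep⟩ := sep_parts_alpha hS
  have hc : ∀ v : α, (G.induce {u | u ≠ v}).Connected := h2.2
  set N : Set α := S.verts ∩ G.neighborSet x with hNdef
  have hNS : N ⊆ S.verts := Set.inter_subset_left
  have hadjN : ∀ y ∈ N, G.Adj x y := fun y hy => hy.2
  have hmemN : ∀ y, y ∈ S.verts → G.Adj x y → y ∈ N := fun y h1 h2 => ⟨h1, h2⟩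
  apply hfree
  by_cases hN2 : ∃ s1 s2, s1 ∈ N ∧ s2 ∈ N ∧ s1 ≠ s2
  · -- `x` has exactly two neighbours on `S`
    obtain ⟨s1, s2, hs1, hs2, hss⟩ := hN2
    obtain ⟨ν, vne, vsub, vdisj, vconn, vadj, hm1, hm2⟩ :=
      hsep s1 s2 (hNS hs1) (hNS hs2) hss
    have hNin : ∀ y ∈ N, y = s1 ∨ y = s2 := by
      intro y hy
      by_contra hcon
      push_neg at hcon
      have h3 : 2 < N.ncard := (Set.two_lt_ncard_iff (Set.toFinite N)).mpr
        ⟨s1, s2, y, hs1, hs2, hy, hss, fun h => hcon.1 h.symm, fun h => hcon.2 h.symm⟩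
      omega
    refine build_extended ν (fun _ => ∅) x vne vdisj
      (fun i hxi => hx (vsub i hxi)) (fun i h => h) ?_ (fun i j _ => Set.disjoint_empty ∅)
      (fun i j _ => Set.empty_disjoint _) vadj
      ⟨s1, Or.inl hm1, hadjN s1 hs1⟩ ⟨s2, Or.inl hm2, hadjN s2 hs2⟩ ?_ ?_
    · intro i
      beta_reduce
      rw [Set.union_empty]
      exact vconn i
    · intro y hy hadjxy
      beta_reduce at hy
      rw [Set.union_empty] at hy
      rcases hNin y (hmemN y (vsub 2 hy) hadjxy) with rfl | rfl
      · exact (vdisj 0 2 (by decide)).ne_of_mem hm1 hy rfl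
      · exact (vdisj 1 2 (by decide)).ne_of_mem hm2 hy rfl
    · intro y hy hadjxy
      beta_reduce at hy
      rw [Set.union_empty] at hy
      rcases hNin y (hmemN y (vsub 3 hy) hadjxy) with rfl | rfl
      · exact (vdisj 0 3 (by decide)).ne_of_mem hm1 hy rfl
      · exact (vdisj 1 3 (by decide)).ne_of_mem hm2 hy rfl
  · by_cases hN1 : ∃ s1, s1 ∈ N
    · -- exactly one neighbour on `S`
      obtain ⟨s1, hs1⟩ := hN1
      have huniqN : ∀ y ∈ N, y = s1 := by
        intro y hy
        by_contra h
        exact hN2 ⟨s1, y, hs1, hy, fun hh => h hh.symm⟩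
      obtain ⟨t, htv, hts⟩ : ∃ t, t ∈ S.verts ∧ t ≠ s1 := by
        by_cases h : p = s1
        · exact ⟨q, hqv, fun hh => hpq (h.trans hh.symm)⟩
        · exact ⟨p, hpv, h⟩
      have hxs1 : x ≠ s1 := fun h => hx (h ▸ hNS hs1)
      obtain ⟨W, hW⟩ := exists_walk_avoiding hc hxs1 hts
      obtain ⟨b, hbv, Q, hQ, hQsub, hQS⟩ := firstHit W S.verts hx htv
      have hbs1 : b ≠ s1 := hW b (hQsub b (Walk.end_mem_support Q))
      obtain ⟨ν, vne, vsub, vdisj, vconn, vadj, hm1, hm2⟩ :=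
        hsep s1 b (hNS hs1) hbv hbs1.symm
      cases Q with
      | nil => exact absurd hbv hx
      | @cons _ p1 _ hadj w =>
        have hxw : x ∉ w.support := ((Walk.cons_isPath_iff _ _).1 hQ).2
        have hwS : ∀ z ∈ w.support, z ∈ S.verts → z = b := by
          intro z hz hzS
          exact hQS z (by simp [hz]) hzS
        have hwdisj : ∀ i : Fin 4, i ≠ 1 → ∀ z ∈ w.support, z ∉ ν i := by
          intro i hi z hz hzi
          have hzb : z = b := hwS z hz (vsub i hzi)
          subst hzb
          exact (vdisj i 1 hi).ne_of_mem hzi hm2 rfl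
        refine build_extended ν
          (fun i => if i = 1 then {z | z ∈ w.support} else ∅) x vne vdisj
          (fun i hxi => hx (vsub i hxi)) ?_ ?_ ?_ ?_ vadj
          ⟨s1, Or.inl hm1, hadjN s1 hs1⟩
          ⟨p1, Or.inr (by simp [Walk.start_mem_support]), hadj⟩ ?_ ?_
        · intro i
          beta_reduce
          by_cases hi : i = 1
          · subst hi
            simp only [if_pos rfl]
            exact fun h => hxw h
          · simp [if_neg hi]
        · intro i
          beta_reduce
          by_cases hi : i = 1
          · subst hi
            simp only [if_pos rfl]
            exact connOn_union (vconn 1) (connOn_support w)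
              ⟨b, hm2, Walk.end_mem_support w⟩
          · rw [if_neg hi, Set.union_empty]
            exact vconn i
        · intro i j hij
          beta_reduce
          by_cases hi : i = 1
          · subst hi
            rw [if_pos rfl, if_neg (fun h => hij h.symm)]
            exact Set.disjoint_empty _
          · rw [if_neg hi]
            exact Set.empty_disjoint _
        · intro i j hij
          beta_reduce
          by_cases hi : i = 1
          · subst hi
            rw [if_pos rfl, Set.disjoint_left]
            intro z hz hzj
            exact hwdisj j (fun h => hij h.symm) z hz hzj
          · rw [if_neg hi]
            exact Set.empty_disjoint _
        · intro y hy hadjxy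
          beta_reduce at hy
          rw [if_neg (show ¬((2:Fin 4) = 1) by decide), Set.union_empty] at hy
          have : y = s1 := huniqN y (hmemN y (vsub 2 hy) hadjxy)
          subst this
          exact (vdisj 0 2 (by decide)).ne_of_mem hm1 hy rfl
        · intro y hy hadjxy
          beta_reduce at hy
          rw [if_neg (show ¬((3:Fin 4) = 1) by decide), Set.union_empty] at hy
          have : y = s1 := huniqN y (hmemN y (vsub 3 hy) hadjxy)
          subst this
          exact (vdisj 0 3 (by decide)).ne_of_mem hm1 hy rfl
    · -- no neighbour on `S` : use the 2-fan
      have hNe : ∀ y, y ∉ N := fun y hy => hN1 ⟨y, hy⟩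
      obtain ⟨a, b, hav, hbv, hab, P, Q, hP, hQ, hPS, hQS, hPQ⟩ :=
        fan_lemma hc ⟨p, q, hpv, hqv, hpq⟩ hx
      obtain ⟨ν, vne, vsub, vdisj, vconn, vadj, hm1, hm2⟩ := hsep a b hav hbv hab
      cases P with
      | nil => exact absurd hav hx
      | @cons _ pP _ hadjP wP =>
        cases Q with
        | nil => exact absurd hbv hx
        | @cons _ pQ _ hadjQ wQ =>
          have hxwP : x ∉ wP.support := ((Walk.cons_isPath_iff _ _).1 hP).2
          have hxwQ : x ∉ wQ.support := ((Walk.cons_isPath_iff _ _).1 hQ).2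
          have hwPS : ∀ z ∈ wP.support, z ∈ S.verts → z = a := by
            intro z hz hzS; exact hPS z (by simp [hz]) hzS
          have hwQS : ∀ z ∈ wQ.support, z ∈ S.verts → z = b := by
            intro z hz hzS; exact hQS z (by simp [hz]) hzS
          have hPQw : ∀ z, z ∈ wP.support → z ∈ wQ.support → False := by
            intro z h1 h2
            have : z = x := hPQ z (by simp [h1]) (by simp [h2])
            exact hxwP (this ▸ h1)
          have hwPdisj : ∀ i : Fin 4, i ≠ 0 → ∀ z ∈ wP.support, z ∉ ν i := by
            intro i hi z hz hzi
            have hza : z = a := hwPS z hz (vsub i hzi)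
            subst hza
            exact (vdisj i 0 hi).ne_of_mem hzi hm1 rfl
          have hwQdisj : ∀ i : Fin 4, i ≠ 1 → ∀ z ∈ wQ.support, z ∉ ν i := by
            intro i hi z hz hzi
            have hzb : z = b := hwQS z hz (vsub i hzi)
            subst hzb
            exact (vdisj i 1 hi).ne_of_mem hzi hm2 rfl
          refine build_extended ν
            (fun i => if i = 0 then {z | z ∈ wP.support}
              else if i = 1 then {z | z ∈ wQ.support} else ∅) x vne vdisj
            (fun i hxi => hx (vsub i hxi)) ?_ ?_ ?_ ?_ vadj
            ⟨pP, Or.inr (by simp [Walk.start_mem_support]), hadjP⟩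
            ⟨pQ, Or.inr (by simp [Walk.start_mem_support]), hadjQ⟩ ?_ ?_
          · intro i
            beta_reduce
            by_cases h0 : i = 0
            · subst h0; simp only [if_pos rfl]; exact fun h => hxwP h
            · by_cases h1 : i = 1
              · subst h1; simp only [if_neg (show ¬((1:Fin 4) = 0) by decide), if_pos rfl]
                exact fun h => hxwQ h
              · simp [if_neg h0, if_neg h1]
          · intro i
            beta_reduce
            by_cases h0 : i = 0
            · subst h0; simp only [if_pos rfl]
              exact connOn_union (vconn 0) (connOn_support wP)
                ⟨a, hm1, Walk.end_mem_support wP⟩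
            · by_cases h1 : i = 1
              · subst h1; simp only [if_neg (show ¬((1:Fin 4) = 0) by decide), if_pos rfl]
                exact connOn_union (vconn 1) (connOn_support wQ)
                  ⟨b, hm2, Walk.end_mem_support wQ⟩
              · rw [if_neg h0, if_neg h1, Set.union_empty]
                exact vconn i
          · -- disjointness of the extensions
            intro i j hij
            beta_reduce
            by_cases hi0 : i = 0
            · subst hi0
              rw [if_pos rfl]
              by_cases hj1 : j = 1
              · subst hj1
                rw [if_neg (by decide), if_pos rfl, Set.disjoint_left]
                intro z hz hz'
                exact hPQw z hz hz'
              · rw [if_neg (fun h => hij h.symm), if_neg hj1]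
                exact Set.disjoint_empty _
            · by_cases hi1 : i = 1
              · subst hi1
                rw [if_neg (by decide), if_pos rfl]
                by_cases hj0 : j = 0
                · subst hj0
                  rw [if_pos rfl, Set.disjoint_left]
                  intro z hz hz'
                  exact hPQw z hz' hz
                · rw [if_neg hj0, if_neg (fun h => hij h.symm)]
                  exact Set.disjoint_empty _
              · rw [if_neg hi0, if_neg hi1]
                exact Set.empty_disjoint _
          · intro i j hij
            beta_reduce
            by_cases hi0 : i = 0
            · subst hi0
              rw [if_pos rfl, Set.disjoint_left]
              intro z hz hzj
              exact hwPdisj j (fun h => hij h.symm) z hz hzj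
            · by_cases hi1 : i = 1
              · subst hi1
                rw [if_neg (by decide), if_pos rfl, Set.disjoint_left]
                intro z hz hzj
                exact hwQdisj j (fun h => hij h.symm) z hz hzj
              · rw [if_neg hi0, if_neg hi1]
                exact Set.empty_disjoint _
          · intro y hy hadjxy
            beta_reduce at hy
            rw [if_neg (show ¬((2:Fin 4) = 0) by decide),
              if_neg (show ¬((2:Fin 4) = 1) by decide), Set.union_empty] at hy
            exact hNe y (hmemN y (vsub 2 hy) hadjxy)
          · intro y hy hadjxy
            beta_reduce at hy
            rw [if_neg (show ¬((3:Fin 4) = 0) by decide),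
              if_neg (show ¬((3:Fin 4) = 1) by decide), Set.union_empty] at hy
            exact hNe y (hmemN y (vsub 3 hy) hadjxy)

end IMWQO
end

section
/- For every well-quasi-order (Q,≤), the class of (Q,≤)-labeled cographs is well-quasi-ordered by the label-respecting induced subgraph relation. -/
open SimpleGraph

namespace IMWQO

/-! ### Auxiliary material for the proof -/

section FinsetLEFacts
variable {Q : Type*} [Preorder Q]

theorem finsetLE_refl (A : Finset Q) : FinsetLE (· ≤ ·) A A :=
  ⟨id, Function.injective_id, fun _ => le_refl _⟩

theorem finsetLE_trans {A B C : Finset Q} (h1 : FinsetLE (· ≤ ·) A B)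
    (h2 : FinsetLE (· ≤ ·) B C) : FinsetLE (· ≤ ·) A C := by
  obtain ⟨φ, hφ, hr⟩ := h1
  obtain ⟨ψ, hψ, hr'⟩ := h2
  exact ⟨ψ ∘ φ, hψ.comp hφ, fun a => le_trans (hr a) (hr' (φ a))⟩

theorem sublist_to_finsetLE {r : Q → Q → Prop} :
    ∀ {l₁ l₂ : List Q}, List.SublistForall₂ r l₁ l₂ → l₁.Nodup → l₂.Nodup →
      ∃ φ : {x // x ∈ l₁} → {x // x ∈ l₂}, Function.Injective φ ∧ ∀ a, r a.val (φ a).val := by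
  intro l₁ l₂ h
  induction h with
  | nil =>
    intro _ _
    exact ⟨fun a => absurd a.2 List.not_mem_nil, fun a => absurd a.2 List.not_mem_nil,
      fun a => absurd a.2 List.not_mem_nil⟩
  | @cons a₁ a₂ l₁ l₂ hab hs IH =>
    intro h1 h2
    obtain ⟨ha₁, h1'⟩ := List.nodup_cons.1 h1
    obtain ⟨ha₂, h2'⟩ := List.nodup_cons.1 h2
    obtain ⟨φ, hφ, hr⟩ := IH h1' h2'
    classical
    refine ⟨fun x => if hx : x.1 ∈ l₁ then ⟨(φ ⟨x.1, hx⟩).1, List.mem_cons_of_mem _ (φ _).2⟩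
      else ⟨a₂, List.mem_cons_self⟩, ?_, ?_⟩
    · rintro ⟨x, hx⟩ ⟨y, hy⟩ hxy
      by_cases hx' : x ∈ l₁ <;> by_cases hy' : y ∈ l₁ <;> simp only [hx', hy', dif_pos,
        dif_neg, not_false_iff, Subtype.mk.injEq] at hxy
      · have := hφ (Subtype.ext hxy)
        simpa using congrArg Subtype.val this
      · exact absurd (hxy ▸ (φ ⟨x, hx'⟩).2) ha₂
      · exact absurd (hxy ▸ (φ ⟨y, hy'⟩).2) ha₂
      · have hx0 : x = a₁ := by rcases List.mem_cons.1 hx with h | h; exact h; exact absurd h hx'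
        have hy0 : y = a₁ := by rcases List.mem_cons.1 hy with h | h; exact h; exact absurd h hy'
        simp [hx0, hy0]
    · rintro ⟨x, hx⟩
      by_cases hx' : x ∈ l₁
      · simpa [hx'] using hr ⟨x, hx'⟩
      · have hx0 : x = a₁ := by rcases List.mem_cons.1 hx with h | h; exact h; exact absurd h hx'
        subst hx0
        simpa only [dif_neg hx'] using hab
  | @cons_right a l₁ l₂ hs IH =>
    intro h1 h2
    obtain ⟨ha, h2'⟩ := List.nodup_cons.1 h2
    obtain ⟨φ, hφ, hr⟩ := IH h1 h2'
    refine ⟨fun x => ⟨(φ x).1, List.mem_cons_of_mem _ (φ x).2⟩, ?_, fun x => hr x⟩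
    intro x y hxy
    exact hφ (Subtype.ext (by simpa using congrArg Subtype.val hxy))

theorem wqo_finsetLE (hwqo : ∀ g : ℕ → Q, ∃ i j, i < j ∧ g i ≤ g j)
    (g : ℕ → Finset Q) : ∃ i j, i < j ∧ FinsetLE (· ≤ ·) (g i) (g j) := by
  have huniv : (Set.univ : Set Q).PartiallyWellOrderedOn (· ≤ ·) := fun f => hwqo (fun n => (f n).1)
  have hh := huniv.partiallyWellOrderedOn_sublistForall₂ (· ≤ ·)
  obtain ⟨i, j, hij, hs⟩ := hh.exists_lt (f := fun k => (g k).toList) (fun k x _ => Set.mem_univ x)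
  refine ⟨i, j, hij, ?_⟩
  obtain ⟨φ, hφ, hr⟩ := sublist_to_finsetLE hs (Finset.nodup_toList _) (Finset.nodup_toList _)
  refine ⟨fun a => ⟨(φ ⟨a.1, by simp⟩).1, by simpa using (φ ⟨a.1, by simp⟩).2⟩, ?_, ?_⟩
  · intro x y hxy
    have := hφ (Subtype.ext (by simpa using congrArg Subtype.val hxy))
    exact Subtype.ext (by simpa using congrArg Subtype.val this)
  · intro a
    exact hr ⟨a.1, by simp⟩

end FinsetLEFacts

section SplitTheorem
variable {V : Type*} [DecidableEq V] (G : SimpleGraph V)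

/-- Reachability within a finset `S`. -/
def RelIn (S : Finset V) : V → V → Prop :=
  Relation.ReflTransGen (fun x y => x ∈ S ∧ y ∈ S ∧ G.Adj x y)

def ConnIn (S : Finset V) : Prop := ∀ x ∈ S, ∀ y ∈ S, RelIn G S x y

def P4In (S : Finset V) : Prop :=
  ∃ a b c d, a ∈ S ∧ b ∈ S ∧ c ∈ S ∧ d ∈ S ∧
    G.Adj a b ∧ G.Adj b c ∧ G.Adj c d ∧ ¬G.Adj a c ∧ ¬G.Adj a d ∧ ¬G.Adj b d

def SplitIn (S : Finset V) : Prop :=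
  ∃ X, X ⊆ S ∧ X.Nonempty ∧ (S \ X).Nonempty ∧
    ((∀ x ∈ X, ∀ y ∈ S \ X, ¬G.Adj x y) ∨ (∀ x ∈ X, ∀ y ∈ S \ X, G.Adj x y))

variable {G}

theorem connIn_of_no_split {S : Finset V}
    (h : ¬ ∃ X, X ⊆ S ∧ X.Nonempty ∧ (S \ X).Nonempty ∧ ∀ x ∈ X, ∀ y ∈ S \ X, ¬G.Adj x y) :
    ConnIn G S := by
  intro x hx y hy
  by_contra hreach
  classical
  refine h ⟨S.filter (fun z => RelIn G S x z), Finset.filter_subset _ _,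
    ⟨x, Finset.mem_filter.2 ⟨hx, Relation.ReflTransGen.refl⟩⟩,
    ⟨y, Finset.mem_sdiff.2 ⟨hy, fun hy' => hreach (Finset.mem_filter.1 hy').2⟩⟩, ?_⟩
  intro u hu w hw hadj
  obtain ⟨huS, hux⟩ := Finset.mem_filter.1 hu
  obtain ⟨hwS, hw'⟩ := Finset.mem_sdiff.1 hw
  exact hw' (Finset.mem_filter.2 ⟨hwS, hux.tail ⟨huS, hwS, hadj⟩⟩)

omit [DecidableEq V] in
theorem transition {S : Finset V} {P : V → Prop} :
    ∀ {x y : V}, RelIn G S x y → P x → ¬P y →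
      ∃ a b, P a ∧ ¬P b ∧ a ∈ S ∧ b ∈ S ∧ G.Adj a b := by
  intro x y h
  induction h with
  | refl => intro h1 h2; exact absurd h1 h2
  | @tail b c hxb hbc IH =>
    intro hPx hPc
    by_cases hPb : P b
    · exact ⟨b, c, hPb, hPc, hbc.1, hbc.2.1, hbc.2.2⟩
    · exact IH hPx hPb

theorem nb_side {S : Finset V} {v : V} {X Y : Finset V}
    (hXY : X ∪ Y = S.erase v) (hdisj : Disjoint X Y)
    (hXne : X.Nonempty) (hYne : Y.Nonempty)
    (hnoedge : ∀ x ∈ X, ∀ y ∈ Y, ¬G.Adj x y)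
    (hconn : ConnIn G S) : ∃ a ∈ X, G.Adj v a := by
  obtain ⟨x0, hx0⟩ := hXne
  obtain ⟨y0, hy0⟩ := hYne
  have hXe : ∀ x ∈ X, x ∈ S.erase v := fun x hx => hXY ▸ Finset.mem_union_left _ hx
  have hYe : ∀ y ∈ Y, y ∈ S.erase v := fun y hy => hXY ▸ Finset.mem_union_right _ hy
  have hx0S := Finset.mem_of_mem_erase (hXe x0 hx0)
  have hy0S := Finset.mem_of_mem_erase (hYe y0 hy0)
  obtain ⟨a, b, haX, hbX, haS, hbS, hab⟩ :=
    transition (P := fun z => z ∈ X) (hconn x0 hx0S y0 hy0S) hx0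
      (Finset.disjoint_left.1 hdisj.symm hy0)
  have hbv : b = v := by
    by_contra hbv
    have : b ∈ X ∪ Y := hXY ▸ Finset.mem_erase.2 ⟨hbv, hbS⟩
    rcases Finset.mem_union.1 this with h | h
    · exact hbX h
    · exact hnoedge a haX b h hab
  exact ⟨a, haX, hbv ▸ hab.symm⟩

/-- The core lemma: a "no-edge split" of `S - v` in a connected, co-connected
graph on `S` yields an induced `P₄`. -/
theorem p4_of_cut {S : Finset V} {v : V} (hv : v ∈ S) {X Y : Finset V}
    (hXY : X ∪ Y = S.erase v) (hdisj : Disjoint X Y)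
    (hXne : X.Nonempty) (hYne : Y.Nonempty)
    (hnoedge : ∀ x ∈ X, ∀ y ∈ Y, ¬G.Adj x y)
    (hconn : ConnIn G S) (hconn' : ConnIn Gᶜ S) : P4In G S := by
  have hXe : ∀ x ∈ X, x ∈ S.erase v := fun x hx => hXY ▸ Finset.mem_union_left _ hx
  have hYe : ∀ y ∈ Y, y ∈ S.erase v := fun y hy => hXY ▸ Finset.mem_union_right _ hy
  have hYX : Y ∪ X = S.erase v := (Finset.union_comm Y X).trans hXY
  have hnoedge' : ∀ y ∈ Y, ∀ x ∈ X, ¬G.Adj y x := fun y hy x hx h => hnoedge x hx y hy h.symm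
  obtain ⟨aX, haX, hvaX⟩ := nb_side hXY hdisj hXne hYne hnoedge hconn (v := v)
  obtain ⟨aY, haY, hvaY⟩ := nb_side hYX hdisj.symm hYne hXne hnoedge' hconn (v := v)
  have hw : ∃ w ∈ S.erase v, ¬G.Adj v w := by
    by_contra hall
    push_neg at hall
    have hx0S := Finset.mem_of_mem_erase (hXe aX haX)
    have hx0v : aX ≠ v := (Finset.mem_erase.1 (hXe aX haX)).1
    rcases Relation.ReflTransGen.cases_head
        (hconn' v hv aX hx0S) with heq | ⟨c, ⟨_, hcS, hadj⟩, _⟩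
    · exact hx0v heq.symm
    · obtain ⟨hvc, hnadj⟩ := (SimpleGraph.compl_adj _ _ _).1 hadj
      exact hnadj (hall c (Finset.mem_erase.2 ⟨fun h => hvc h.symm, hcS⟩))
  obtain ⟨w, hwe, hwnadj⟩ := hw
  have hwS := Finset.mem_of_mem_erase hwe
  have hwv := (Finset.mem_erase.1 hwe).1
  have haXS := Finset.mem_of_mem_erase (hXe aX haX)
  obtain ⟨a, b, hPa, hPb, haS, hbS, hab⟩ :=
    transition (P := fun z => G.Adj v z ∨ z = v) (hconn aX haXS w hwS)
      (Or.inl hvaX) (by rintro (h | h); exacts [hwnadj h, hwv h])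
  have hvb : ¬G.Adj v b := fun h => hPb (Or.inl h)
  have hbv : b ≠ v := fun h => hPb (Or.inr h)
  have hva : G.Adj v a := by
    rcases hPa with h | rfl
    · exact h
    · exact absurd hab hvb
  have hav : a ≠ v := fun h => G.irrefl (h ▸ hva)
  have haXY : a ∈ X ∪ Y := hXY ▸ Finset.mem_erase.2 ⟨hav, haS⟩
  have hbXY : b ∈ X ∪ Y := hXY ▸ Finset.mem_erase.2 ⟨hbv, hbS⟩
  rcases Finset.mem_union.1 haXY with haIn | haIn
  · have hbIn : b ∈ X := by
      rcases Finset.mem_union.1 hbXY with h | h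
      · exact h
      · exact absurd hab (hnoedge a haIn b h)
    have haYS := Finset.mem_of_mem_erase (hYe aY haY)
    exact ⟨aY, v, a, b, haYS, hv, haS, hbS, hvaY.symm, hva, hab,
      fun h => hnoedge a haIn aY haY h.symm,
      fun h => hnoedge b hbIn aY haY h.symm, hvb⟩
  · have hbIn : b ∈ Y := by
      rcases Finset.mem_union.1 hbXY with h | h
      · exact absurd hab.symm (hnoedge b h a haIn)
      · exact h
    exact ⟨aX, v, a, b, haXS, hv, haS, hbS, hvaX.symm, hva, hab,
      fun h => hnoedge aX haX a haIn h,
      fun h => hnoedge aX haX b hbIn h, hvb⟩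

omit [DecidableEq V] in
theorem p4In_mono {S T : Finset V} (hST : S ⊆ T) (h : P4In G S) : P4In G T := by
  obtain ⟨a, b, c, d, ha, hb, hc, hd, hrest⟩ := h
  exact ⟨a, b, c, d, hST ha, hST hb, hST hc, hST hd, hrest⟩

omit [DecidableEq V] in
theorem p4In_compl {S : Finset V} (h : P4In Gᶜ S) : P4In G S := by
  obtain ⟨a, b, c, d, ha, hb, hc, hd, hab, hbc, hcd, hac, had, hbd⟩ := h
  have hab' : ¬G.Adj a b := ((SimpleGraph.compl_adj _ _ _).1 hab).2
  have hbc' : ¬G.Adj b c := ((SimpleGraph.compl_adj _ _ _).1 hbc).2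
  have hcd' : ¬G.Adj c d := ((SimpleGraph.compl_adj _ _ _).1 hcd).2
  have hne_ac : a ≠ c := fun h => had (h ▸ hcd)
  have hne_ad : a ≠ d := fun h => hbd (h ▸ hab.symm)
  have hne_bd : b ≠ d := fun h => had (h ▸ hab)
  have hac' : G.Adj a c := by
    by_contra h
    exact hac ((SimpleGraph.compl_adj _ _ _).2 ⟨hne_ac, h⟩)
  have had' : G.Adj a d := by
    by_contra h
    exact had ((SimpleGraph.compl_adj _ _ _).2 ⟨hne_ad, h⟩)
  have hbd' : G.Adj b d := by
    by_contra h
    exact hbd ((SimpleGraph.compl_adj _ _ _).2 ⟨hne_bd, h⟩)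
  exact ⟨c, a, d, b, hc, ha, hd, hb, hac'.symm, had', hbd'.symm, hcd',
    fun h => hbc' h.symm, hab'⟩

theorem splitIn_pair {S : Finset V} (h2 : S.card = 2) : SplitIn G S := by
  obtain ⟨x, y, hxy, rfl⟩ := Finset.card_eq_two.1 h2
  have hsd : ({x, y} : Finset V) \ {x} = {y} := by
    ext z
    simp only [Finset.mem_sdiff, Finset.mem_insert, Finset.mem_singleton]
    constructor
    · rintro ⟨h | h, h2⟩
      · exact absurd h h2
      · exact h
    · rintro rfl
      exact ⟨Or.inr rfl, fun h => hxy h.symm⟩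
  refine ⟨{x}, by simp, ⟨x, Finset.mem_singleton_self x⟩,
    by rw [hsd]; exact ⟨y, Finset.mem_singleton_self y⟩, ?_⟩
  by_cases hadj : G.Adj x y
  · right
    intro u hu w hw
    rw [Finset.mem_singleton] at hu
    rw [hsd, Finset.mem_singleton] at hw
    subst hu; subst hw; exact hadj
  · left
    intro u hu w hw
    rw [Finset.mem_singleton] at hu
    rw [hsd, Finset.mem_singleton] at hw
    subst hu; subst hw; exact hadj

theorem connIn_pair_of_no_split {S : Finset V} (hns : ¬SplitIn G S) :
    ConnIn G S ∧ ConnIn Gᶜ S := by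
  constructor
  · exact connIn_of_no_split (fun ⟨X, h1, h2, h3, h4⟩ => hns ⟨X, h1, h2, h3, Or.inl h4⟩)
  · refine connIn_of_no_split (fun ⟨X, h1, h2, h3, h4⟩ => hns ⟨X, h1, h2, h3, Or.inr ?_⟩)
    intro x hx y hy
    by_contra hadj
    have hne : x ≠ y := by
      rintro rfl
      exact (Finset.mem_sdiff.1 hy).2 hx
    exact h4 x hx y hy ((SimpleGraph.compl_adj _ _ _).2 ⟨hne, hadj⟩)

theorem splitIn_of_noP4 :
    ∀ (n : ℕ) (S : Finset V), S.card = n → 2 ≤ S.card → ¬P4In G S → SplitIn G S := by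
  intro n
  induction n using Nat.strong_induction_on with
  | _ n IH =>
    intro S hcard h2 hP4
    by_contra hns
    obtain ⟨hconn, hconn'⟩ := connIn_pair_of_no_split hns
    rcases eq_or_lt_of_le h2 with h2' | h3
    · exact hns (splitIn_pair h2'.symm)
    · obtain ⟨v, hv⟩ := Finset.card_pos.1 (lt_of_lt_of_le (by norm_num) h2)
      set S' := S.erase v with hS'
      have hcS' : S'.card = S.card - 1 := Finset.card_erase_of_mem hv
      have h2S' : 2 ≤ S'.card := by omega
      by_cases hsp : SplitIn G S'
      · obtain ⟨X, hXsub, hXne, hXcne, htype⟩ := hsp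
        have hXY : X ∪ (S' \ X) = S.erase v := Finset.union_sdiff_of_subset hXsub
        have hdisj : Disjoint X (S' \ X) := Finset.disjoint_sdiff
        rcases htype with hno | hall
        · exact hP4 (p4_of_cut hv hXY hdisj hXne hXcne hno hconn hconn')
        · refine hP4 (p4In_compl (p4_of_cut (G := Gᶜ) hv hXY hdisj hXne hXcne ?_ hconn' ?_))
          · intro x hx y hy hadj
            exact ((SimpleGraph.compl_adj _ _ _).1 hadj).2 (hall x hx y hy)
          · rw [compl_compl]
            exact hconn
      · have : P4In G S' := by
          by_contra h'
          exact hsp (IH S'.card (by rw [hcS']; omega) S' rfl h2S' h')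
        exact hP4 (p4In_mono (Finset.erase_subset _ _) this)

omit [DecidableEq V] in
theorem noP4In_of_isCograph (h : IsCograph G) (S : Finset V) : ¬P4In G S := by
  rintro ⟨a, b, c, d, -, -, -, -, hab, hbc, hcd, hac, had, hbd⟩
  have nab : a ≠ b := G.ne_of_adj hab
  have nbc : b ≠ c := G.ne_of_adj hbc
  have ncd : c ≠ d := G.ne_of_adj hcd
  have nac : a ≠ c := fun h => had (h ▸ hcd)
  have nad : a ≠ d := fun h => hbd (h ▸ hab).symm
  have nbd : b ≠ d := fun h => had (h ▸ hab)
  have hba := hab.symm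
  have hcb := hbc.symm
  have hdc := hcd.symm
  have hca : ¬G.Adj c a := fun h => hac h.symm
  have hda : ¬G.Adj d a := fun h => had h.symm
  have hdb : ¬G.Adj d b := fun h => hbd h.symm
  refine h ![a, b, c, d] ?_ ?_
  · intro x y hxy
    fin_cases x <;> fin_cases y <;>
      simp_all [Matrix.cons_val_zero, Matrix.cons_val_one, Matrix.head_cons] <;>
      first
        | rfl
        | (exfalso; first
            | exact nab hxy | exact nbc hxy | exact ncd hxy | exact nac hxy
            | exact nad hxy | exact nbd hxy | exact nab hxy.symm | exact nbc hxy.symm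
            | exact ncd hxy.symm | exact nac hxy.symm | exact nad hxy.symm
            | exact nbd hxy.symm)
  · intro x y
    fin_cases x <;> fin_cases y <;>
      simp [pathGraph_adj, Matrix.cons_val_zero, Matrix.cons_val_one, Matrix.head_cons,
        show ((3 : Fin 4) : ℕ) = 3 from rfl, show ((2 : Fin 4) : ℕ) = 2 from rfl] <;>
      first
        | assumption
        | exact G.irrefl
        | omega

end SplitTheorem

section Labeled
variable {Q : Type*} [Preorder Q]

theorem labISub_refl (G : LabGraph Q) : LabISub (· ≤ ·) G G :=
  ⟨id, Function.injective_id, fun _ _ => Iff.rfl, fun _ => finsetLE_refl _⟩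

theorem labISub_trans {A B C : LabGraph Q} (h1 : LabISub (· ≤ ·) A B)
    (h2 : LabISub (· ≤ ·) B C) : LabISub (· ≤ ·) A C := by
  obtain ⟨φ, hφinj, hφadj, hφlab⟩ := h1
  obtain ⟨ψ, hψinj, hψadj, hψlab⟩ := h2
  exact ⟨ψ ∘ φ, hψinj.comp hφinj,
    fun a b => (hφadj a b).trans (hψadj (φ a) (φ b)),
    fun a => finsetLE_trans (hφlab a) (hψlab (φ a))⟩

/-- The induced labeled subgraph of `G` on the vertex set `X`. -/
noncomputable def restrict (G : LabGraph Q) (X : Finset (Fin G.n)) : LabGraph Q where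
  n := X.card
  graph := SimpleGraph.comap (fun i => ((X.orderIsoOfFin rfl) i).1) G.graph
  label := fun i => G.label ((X.orderIsoOfFin rfl) i).1

theorem restrict_isub (G : LabGraph Q) (X : Finset (Fin G.n)) :
    LabISub (· ≤ ·) (restrict G X) G :=
  ⟨fun i => ((X.orderIsoOfFin rfl) i).1,
   fun i j h => (X.orderIsoOfFin rfl).injective (Subtype.ext h),
   fun _ _ => Iff.rfl, fun _ => finsetLE_refl _⟩

theorem restrict_n_lt {G : LabGraph Q} {X : Finset (Fin G.n)} (h : Xᶜ.Nonempty) :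
    (restrict G X).n < G.n := by
  obtain ⟨y, hy⟩ := h
  have hX : X ≠ Finset.univ := by
    intro hX
    rw [hX] at hy
    simp at hy
  have : X.card < (Finset.univ : Finset (Fin G.n)).card :=
    Finset.card_lt_card (Finset.ssubset_univ_iff.2 hX)
  show X.card < G.n
  simpa using this

theorem cograph_restrict {G : LabGraph Q} (h : IsCograph G.graph) (X : Finset (Fin G.n)) :
    IsCograph (restrict G X).graph := by
  intro f hf hpat
  exact h (fun i => ((X.orderIsoOfFin rfl) (f i)).1)
    (fun {i j} hij => hf ((X.orderIsoOfFin rfl).injective (Subtype.ext hij)))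
    hpat

theorem exists_split {G : LabGraph Q} (hco : IsCograph G.graph) (h2 : 2 ≤ G.n) :
    ∃ (X : Finset (Fin G.n)) (c : Bool), X.Nonempty ∧ Xᶜ.Nonempty ∧
      ∀ x ∈ X, ∀ y ∉ X, (G.graph.Adj x y ↔ c = true) := by
  have hcard : (Finset.univ : Finset (Fin G.n)).card = G.n := by simp
  obtain ⟨X, hXsub, hXne, hXcne, htype⟩ :=
    splitIn_of_noP4 (G := G.graph) G.n Finset.univ hcard (by rw [hcard]; exact h2)
      (noP4In_of_isCograph hco _)
  have hmem : ∀ y : Fin G.n, y ∉ X → y ∈ Finset.univ \ X := by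
    intro y hy; simp [Finset.mem_sdiff, hy]
  have hXc : Xᶜ = Finset.univ \ X := by rw [Finset.compl_eq_univ_sdiff]
  rcases htype with hno | hall
  · exact ⟨X, false, hXne, by rw [hXc]; exact hXcne,
      fun x hx y hy => iff_of_false (hno x hx y (hmem y hy)) (by simp)⟩
  · exact ⟨X, true, hXne, by rw [hXc]; exact hXcne,
      fun x hx y hy => iff_of_true (hall x hx y (hmem y hy)) rfl⟩

theorem labISub_of_zero {G H : LabGraph Q} (hG : G.n = 0) : LabISub (· ≤ ·) G H := by
  have hF : ∀ a : Fin G.n, False := fun a => by have := a.isLt; omega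
  exact ⟨fun a => (hF a).elim, fun a => (hF a).elim, fun a => (hF a).elim,
    fun a => (hF a).elim⟩

theorem labISub_of_one {G H : LabGraph Q} (hG : G.n = 1) (hH : H.n = 1)
    (hl : ∀ (a : Fin G.n) (b : Fin H.n), FinsetLE (· ≤ ·) (G.label a) (H.label b)) :
    LabISub (· ≤ ·) G H := by
  refine ⟨fun _ => ⟨0, by omega⟩, ?_, ?_, fun a => hl a _⟩
  · intro a b _
    have ha := a.isLt
    have hb := b.isLt
    exact Fin.ext (by omega)
  · intro a b
    have hab : a = b := by
      have ha := a.isLt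
      have hb := b.isLt
      exact Fin.ext (by omega)
    subst hab
    exact iff_of_false (G.graph.irrefl) (H.graph.irrefl)

theorem extract {p : ℕ → Prop} (h : ∀ N, ∃ k, N ≤ k ∧ p k) :
    ∃ σ : ℕ → ℕ, StrictMono σ ∧ ∀ k, p (σ k) := by
  choose F hF1 hF2 using h
  refine ⟨fun k => Nat.rec (F 0) (fun _ prev => F (prev + 1)) k,
    strictMono_nat_of_lt_succ (fun k => lt_of_lt_of_le (Nat.lt_succ_self _) (hF1 _)),
    fun k => ?_⟩
  cases k with
  | zero => exact hF2 0
  | succ k => exact hF2 _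

/-- The key combination lemma: if two labeled graphs split along homogeneous cuts of
the same type, and the respective sides embed, then the whole graphs embed. -/
theorem combine {G G' : LabGraph Q} {X : Finset (Fin G.n)} {X' : Finset (Fin G'.n)} {c : Bool}
    (hcr : ∀ x ∈ X, ∀ y ∉ X, (G.graph.Adj x y ↔ c = true))
    (hcr' : ∀ x ∈ X', ∀ y ∉ X', (G'.graph.Adj x y ↔ c = true))
    (h1 : LabISub (· ≤ ·) (restrict G X) (restrict G' X'))
    (h2 : LabISub (· ≤ ·) (restrict G Xᶜ) (restrict G' X'ᶜ)) :
    LabISub (· ≤ ·) G G' := by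
  classical
  obtain ⟨ψ₁, hψ₁inj, hψ₁adj, hψ₁lab⟩ := h1
  obtain ⟨ψ₂, hψ₂inj, hψ₂adj, hψ₂lab⟩ := h2
  have hadj1 : ∀ a b : Fin X.card,
      G.graph.Adj ((X.orderIsoOfFin rfl) a).1 ((X.orderIsoOfFin rfl) b).1 ↔
      G'.graph.Adj ((X'.orderIsoOfFin rfl) (ψ₁ a)).1 ((X'.orderIsoOfFin rfl) (ψ₁ b)).1 :=
    hψ₁adj
  have hadj2 : ∀ a b : Fin Xᶜ.card,
      G.graph.Adj ((Xᶜ.orderIsoOfFin rfl) a).1 ((Xᶜ.orderIsoOfFin rfl) b).1 ↔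
      G'.graph.Adj ((X'ᶜ.orderIsoOfFin rfl) (ψ₂ a)).1 ((X'ᶜ.orderIsoOfFin rfl) (ψ₂ b)).1 :=
    hψ₂adj
  have hlab1 : ∀ a : Fin X.card,
      FinsetLE (· ≤ ·) (G.label ((X.orderIsoOfFin rfl) a).1)
        (G'.label ((X'.orderIsoOfFin rfl) (ψ₁ a)).1) := hψ₁lab
  have hlab2 : ∀ a : Fin Xᶜ.card,
      FinsetLE (· ≤ ·) (G.label ((Xᶜ.orderIsoOfFin rfl) a).1)
        (G'.label ((X'ᶜ.orderIsoOfFin rfl) (ψ₂ a)).1) := hψ₂lab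
  have rt : ∀ (x : Fin G.n) (hx : x ∈ X),
      ((X.orderIsoOfFin rfl) ((X.orderIsoOfFin rfl).symm ⟨x, hx⟩)).1 = x := by
    intro x hx
    rw [OrderIso.apply_symm_apply]
  have rtc : ∀ (x : Fin G.n) (hx : x ∈ Xᶜ),
      ((Xᶜ.orderIsoOfFin rfl) ((Xᶜ.orderIsoOfFin rfl).symm ⟨x, hx⟩)).1 = x := by
    intro x hx
    rw [OrderIso.apply_symm_apply]
  have hmem1 : ∀ i : Fin X'.card, ((X'.orderIsoOfFin rfl) i).1 ∈ X' :=
    fun i => ((X'.orderIsoOfFin rfl) i).2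
  have hmem2 : ∀ i : Fin X'ᶜ.card, ((X'ᶜ.orderIsoOfFin rfl) i).1 ∉ X' :=
    fun i => Finset.mem_compl.1 ((X'ᶜ.orderIsoOfFin rfl) i).2
  let φ : Fin G.n → Fin G'.n := fun x =>
    if hx : x ∈ X then ((X'.orderIsoOfFin rfl) (ψ₁ ((X.orderIsoOfFin rfl).symm ⟨x, hx⟩))).1
    else ((X'ᶜ.orderIsoOfFin rfl) (ψ₂ ((Xᶜ.orderIsoOfFin rfl).symm
      ⟨x, Finset.mem_compl.2 hx⟩))).1
  have hφpos : ∀ (x : Fin G.n) (hx : x ∈ X),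
      φ x = ((X'.orderIsoOfFin rfl) (ψ₁ ((X.orderIsoOfFin rfl).symm ⟨x, hx⟩))).1 :=
    fun x hx => dif_pos hx
  have hφneg : ∀ (x : Fin G.n) (hx : x ∉ X),
      φ x = ((X'ᶜ.orderIsoOfFin rfl) (ψ₂ ((Xᶜ.orderIsoOfFin rfl).symm
        ⟨x, Finset.mem_compl.2 hx⟩))).1 :=
    fun x hx => dif_neg hx
  have hφmem : ∀ (x : Fin G.n) (hx : x ∈ X), φ x ∈ X' := by
    intro x hx
    rw [hφpos x hx]
    exact hmem1 _
  have hφmem' : ∀ (x : Fin G.n) (hx : x ∉ X), φ x ∉ X' := by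
    intro x hx
    rw [hφneg x hx]
    exact hmem2 _
  refine ⟨φ, ?_, ?_, ?_⟩
  · intro x y hxy
    by_cases hx : x ∈ X <;> by_cases hy : y ∈ X
    · rw [hφpos x hx, hφpos y hy] at hxy
      have h' := (X.orderIsoOfFin rfl).symm.injective
        (hψ₁inj ((X'.orderIsoOfFin rfl).injective (Subtype.ext hxy)))
      simpa using congrArg Subtype.val h'
    · exact absurd (hxy ▸ hφmem x hx) (hφmem' y hy)
    · exact absurd (hxy.symm ▸ hφmem y hy) (hφmem' x hx)
    · rw [hφneg x hx, hφneg y hy] at hxy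
      have h' := (Xᶜ.orderIsoOfFin rfl).symm.injective
        (hψ₂inj ((X'ᶜ.orderIsoOfFin rfl).injective (Subtype.ext hxy)))
      simpa using congrArg Subtype.val h'
  · intro a b
    by_cases ha : a ∈ X <;> by_cases hb : b ∈ X
    · rw [hφpos a ha, hφpos b hb]
      have h := hadj1 ((X.orderIsoOfFin rfl).symm ⟨a, ha⟩) ((X.orderIsoOfFin rfl).symm ⟨b, hb⟩)
      rw [rt a ha, rt b hb] at h
      exact h
    · rw [hφpos a ha, hφneg b hb]
      exact (hcr a ha b hb).trans
        ((hcr' _ (hmem1 _) _ (hmem2 _)).symm)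
    · rw [hφneg a ha, hφpos b hb]
      exact (G.graph.adj_comm a b).trans ((hcr b hb a ha).trans
        (((hcr' _ (hmem1 _) _ (hmem2 _)).symm).trans (G'.graph.adj_comm _ _)))
    · rw [hφneg a ha, hφneg b hb]
      have h := hadj2 ((Xᶜ.orderIsoOfFin rfl).symm ⟨a, Finset.mem_compl.2 ha⟩)
        ((Xᶜ.orderIsoOfFin rfl).symm ⟨b, Finset.mem_compl.2 hb⟩)
      rw [rtc a (Finset.mem_compl.2 ha), rtc b (Finset.mem_compl.2 hb)] at h
      exact h
  · intro a
    by_cases ha : a ∈ X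
    · rw [hφpos a ha]
      have h := hlab1 ((X.orderIsoOfFin rfl).symm ⟨a, ha⟩)
      rw [rt a ha] at h
      exact h
    · rw [hφneg a ha]
      have h := hlab2 ((Xᶜ.orderIsoOfFin rfl).symm ⟨a, Finset.mem_compl.2 ha⟩)
      rw [rtc a (Finset.mem_compl.2 ha)] at h
      exact h

end Labeled

theorem cographs_pwo {Q : Type*} [Preorder Q]
    (hwqo : IsWqo ((· ≤ ·) : Q → Q → Prop)) :
    {G : LabGraph Q | IsCograph G.graph}.PartiallyWellOrderedOn (LabISub (· ≤ ·)) := by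
  classical
  rw [Set.PartiallyWellOrderedOn.iff_not_exists_isMinBadSeq (fun G : LabGraph Q => G.n)]
  rintro ⟨g, ⟨hmem, hpair⟩, hmin⟩
  -- Step 1: all but finitely many terms have at least 2 vertices
  have hbig : ∃ K, ∀ k, K ≤ k → 2 ≤ (g k).n := by
    by_contra hKc
    push_neg at hKc
    obtain ⟨σ, hσm, hσ⟩ := extract (p := fun k => (g k).n < 2) (by
      intro N
      obtain ⟨k, hk1, hk2⟩ := hKc N
      exact ⟨k, hk1, hk2⟩)
    by_cases h0 : ∀ N, ∃ k, N ≤ k ∧ (g (σ k)).n = 0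
    · obtain ⟨τ, hτm, hτ⟩ := extract h0
      exact hpair (σ (τ 0)) (σ (τ 1)) (hσm (hτm Nat.zero_lt_one)) (labISub_of_zero (hτ 0))
    · push_neg at h0
      obtain ⟨N, hN⟩ := h0
      have h1 : ∀ k, (g (σ (N + k))).n = 1 := by
        intro k
        have ha := hσ (N + k)
        have hb := hN (N + k) (Nat.le_add_right _ _)
        omega
      obtain ⟨i, j, hij, hle⟩ := wqo_finsetLE hwqo
        (fun k => (g (σ (N + k))).label ⟨0, by rw [h1 k]; norm_num⟩)
      refine hpair (σ (N + i)) (σ (N + j)) (hσm (by omega)) ?_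
      refine labISub_of_one (h1 i) (h1 j) ?_
      intro a b
      have hsi : ∀ x y : Fin (g (σ (N + i))).n, x = y := fun x y => by
        have hx := x.isLt
        have hy := y.isLt
        have h := h1 i
        exact Fin.ext (by omega)
      have hsj : ∀ x y : Fin (g (σ (N + j))).n, x = y := fun x y => by
        have hx := x.isLt
        have hy := y.isLt
        have h := h1 j
        exact Fin.ext (by omega)
      rw [hsi a ⟨0, by rw [h1 i]; norm_num⟩, hsj b ⟨0, by rw [h1 j]; norm_num⟩]
      exact hle
  obtain ⟨K, hK⟩ := hbig
  -- Step 2: choose a split for each term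
  have hsplit : ∀ k : ℕ, ∃ (X : Finset (Fin (g (K + k)).n)) (c : Bool),
      X.Nonempty ∧ Xᶜ.Nonempty ∧
      ∀ x ∈ X, ∀ y ∉ X, ((g (K + k)).graph.Adj x y ↔ c = true) :=
    fun k => exists_split (hmem (K + k)) (hK (K + k) (Nat.le_add_right _ _))
  choose X c hXne hXcne hcross using hsplit
  -- Step 3: the set of parts is pwo, by minimality
  have hDpwo : {x : LabGraph Q |
      ∃ k, x = restrict (g (K + k)) (X k) ∨
        x = restrict (g (K + k)) (X k)ᶜ}.PartiallyWellOrderedOn (LabISub (· ≤ ·)) := by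
    rw [Set.PartiallyWellOrderedOn.iff_forall_not_isBadSeq]
    rintro b ⟨hbmem, hbpair⟩
    choose κ hκ using hbmem
    have hexmin : ∃ n, ∃ j, κ j = n := ⟨κ 0, 0, rfl⟩
    obtain ⟨j0, hj0⟩ := Nat.find_spec hexmin
    have hk0min : ∀ j, Nat.find hexmin ≤ κ j := fun j => Nat.find_min' hexmin ⟨j, rfl⟩
    set k0 := Nat.find hexmin with hk0def
    set N0 := K + k0 with hN0def
    set M : ℕ → LabGraph Q := fun i => if i < N0 then g i else b (j0 + (i - N0)) with hMdef
    have hsub : ∀ j, LabISub (· ≤ ·) (b j) (g (K + κ j)) := by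
      intro j
      rcases hκ j with h | h <;> rw [h] <;> exact restrict_isub _ _
    have hcog : ∀ j, IsCograph (b j).graph := by
      intro j
      rcases hκ j with h | h <;> rw [h] <;> exact cograph_restrict (hmem _) _
    have hlt : ∀ j, (b j).n < (g (K + κ j)).n := by
      intro j
      rcases hκ j with h | h <;> rw [h]
      · exact restrict_n_lt (hXcne _)
      · refine restrict_n_lt ?_
        rw [compl_compl]
        exact hXne _
    have hMbad : Set.PartiallyWellOrderedOn.IsBadSeq (LabISub (· ≤ ·))
        {G : LabGraph Q | IsCograph G.graph} M := by
      refine ⟨?_, ?_⟩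
      · intro i
        by_cases hi : i < N0
        · simpa [hMdef, hi] using hmem i
        · simpa [hMdef, hi] using hcog _
      · intro i j hij hr
        by_cases hi : i < N0 <;> by_cases hj : j < N0
        · simp only [hMdef, if_pos hi, if_pos hj] at hr
          exact hpair i j hij hr
        · simp only [hMdef, if_pos hi, if_neg hj] at hr
          have h2 := labISub_trans hr (hsub (j0 + (j - N0)))
          exact hpair i (K + κ (j0 + (j - N0)))
            (by have := hk0min (j0 + (j - N0)); omega) h2
        · omega
        · simp only [hMdef, if_neg hi, if_neg hj] at hr
          exact hbpair (j0 + (i - N0)) (j0 + (j - N0)) (by omega) hr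
    refine hmin N0 M (fun m hm => by simp [hMdef, hm]) ?_ hMbad
    have hMN0 : M N0 = b j0 := by simp [hMdef]
    rw [hMN0]
    have hlt0 := hlt j0
    rw [hj0] at hlt0
    exact hlt0
  -- Step 4: extract a subsequence with constant split type and increasing first parts
  haveI : IsTrans (LabGraph Q) (LabISub (· ≤ ·)) := ⟨fun _ _ _ hab hbc => labISub_trans hab hbc⟩
  haveI : IsRefl (LabGraph Q) (LabISub (· ≤ ·)) := ⟨labISub_refl⟩
  haveI : IsPreorder (LabGraph Q) (LabISub (· ≤ ·)) :=
    { refl := labISub_refl, trans := fun _ _ _ hab hbc => labISub_trans hab hbc }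
  have hbool : ∃ b0 : Bool, ∀ N, ∃ k, N ≤ k ∧ c k = b0 := by
    by_contra hb
    push_neg at hb
    obtain ⟨N1, hN1⟩ := hb true
    obtain ⟨N2, hN2⟩ := hb false
    rcases Bool.eq_false_or_eq_true (c (max N1 N2)) with h | h
    · exact hN1 (max N1 N2) (le_max_left _ _) h
    · exact hN2 (max N1 N2) (le_max_right _ _) h
  obtain ⟨b0, hb0⟩ := hbool
  obtain ⟨σ, hσm, hσc⟩ := extract hb0
  obtain ⟨e, he⟩ := hDpwo.exists_monotone_subseq
    (f := fun k => restrict (g (K + σ k)) (X (σ k))) (fun k => ⟨σ k, Or.inl rfl⟩)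
  obtain ⟨i, j, hij, hBij⟩ := hDpwo.exists_lt
    (f := fun k => restrict (g (K + σ (e k))) (X (σ (e k)))ᶜ) (fun k => ⟨σ (e k), Or.inr rfl⟩)
  have hAij := he i j (le_of_lt hij)
  have hcomb := combine (c := b0)
    (fun x hx y hy => (hcross (σ (e i)) x hx y hy).trans (by rw [hσc (e i)]))
    (fun x hx y hy => (hcross (σ (e j)) x hx y hy).trans (by rw [hσc (e j)]))
    hAij hBij
  exact hpair (K + σ (e i)) (K + σ (e j))
    (by have := hσm (e.strictMono hij); omega) hcomb

/-- For every wqo `(Q, ≤)`, the `(Q, ≤)`-labeled cographs are well-quasi-ordered by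
the label-respecting induced subgraph relation. -/
theorem labeled_cographs_wqo_inducedSubgraph {Q : Type*} [Preorder Q]
    (hwqo : IsWqo ((· ≤ ·) : Q → Q → Prop))
    (f : ℕ → LabGraph Q) (hf : ∀ i, IsCograph (f i).graph) :
    ∃ i j, i < j ∧ LabISub (· ≤ ·) (f i) (f j) := by
  obtain ⟨i, j, hij, h⟩ := (cographs_pwo hwqo).exists_lt (f := f) (fun i => hf i)
  exact ⟨i, j, hij, h⟩

end IMWQO
end
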